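/- arXiv:2502.13271 — 6 statements merged into one kernel-verified Lean document; each statement's English description precedes it below -/
import Mathlib

section
/- Let F be an (n,w)-minihyper in PG(r,q) (a multiset of points such that every hyperplane has multiplicity at least w, some hyperplane has multiplicity exactly w, and the total multiplicity is n). Then for any s-dimensional subspace S of PG(r,q) with 0 ≤ s ≤ r-1, the multiplicity F(S) satisfies F(S) ≥ ⌈(v_{r-s}·w − v_{r-s-1}·n)/q^{r-s-1}⌉, where v_k = (q^k−1)/(q−1). -/
open scoped BigOperators

noncomputable section

/-- Points of the projective geometry `PG(m-1, q)`, where the underlying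
vector space is `F^m`. -/
abbrev PGPt (F : Type) [Field F] (m : ℕ) := Projectivization F (Fin m → F)

/-- The multiplicity of a flat (given as a submodule of `F^m`) with respect to
a multiset of points `K`: the sum of the multiplicities of the points lying in the flat. -/
def fm {F : Type} [Field F] {m : ℕ} (K : PGPt F m → ℕ)
    (W : Submodule F (Fin m → F)) : ℕ :=
  ∑ᶠ P ∈ {P : PGPt F m | P.submodule ≤ W}, K P

/-- `K` is an `(n, w)`-minihyper in `PG(m-1, q)`: total multiplicity `n`, every
hyperplane (flat of projective dimension `m-2`, i.e. rank `m-1`) has multiplicity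
at least `w`, and some hyperplane has multiplicity exactly `w`. -/
def IsMinihyper {F : Type} [Field F] {m : ℕ} (K : PGPt F m → ℕ) (n w : ℕ) : Prop :=
  fm K ⊤ = n ∧
  (∀ H : Submodule F (Fin m → F), Module.finrank F H = m - 1 → w ≤ fm K H) ∧
  (∃ H : Submodule F (Fin m → F), Module.finrank F H = m - 1 ∧ fm K H = w)

/-- `K` is an `(n, w)`-arc in `PG(m-1, q)`. -/
def IsArc {F : Type} [Field F] {m : ℕ} (K : PGPt F m → ℕ) (n w : ℕ) : Prop :=
  fm K ⊤ = n ∧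
  (∀ H : Submodule F (Fin m → F), Module.finrank F H = m - 1 → fm K H ≤ w) ∧
  (∃ H : Submodule F (Fin m → F), Module.finrank F H = m - 1 ∧ fm K H = w)

/-- `v_k = (q^k - 1)/(q - 1)`, the number of points of `PG(k-1, q)`. -/
def vv (q k : ℕ) : ℕ := ∑ i ∈ Finset.range k, q ^ i

set_option linter.unusedSectionVars false
set_option maxHeartbeats 1000000

open Module
open scoped LinearAlgebra.Projectivization

section Aux
variable {F : Type} [Field F] [Fintype F]

lemma vv_mul (q k : ℕ) (hq : 1 ≤ q) : vv q k * (q - 1) = q ^ k - 1 := by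
  induction k with
  | zero => simp [vv]
  | succ k ih =>
    have : vv q (k+1) = vv q k + q ^ k := by simp [vv, Finset.sum_range_succ]
    rw [this, add_mul, ih]
    have h1 : 1 ≤ q ^ k := Nat.one_le_pow _ _ hq
    have h2 : q ^ k ≤ q ^ (k+1) := Nat.pow_le_pow_right hq (by omega)
    have h3 : q ^ (k+1) = q ^ k * q := by ring
    have h4 : q ^ k * (q-1) = q ^ k * q - q ^ k := by
      rw [Nat.mul_sub, mul_one]
    omega

-- proportionality of functionals with same kernel
lemma prop_ker {V : Type} [AddCommGroup V] [Module F V] (φ ψ : V →ₗ[F] F)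
    (hφ : φ ≠ 0) (h : LinearMap.ker φ = LinearMap.ker ψ) : ∃ c : F, ψ = c • φ := by
  obtain ⟨u, hu⟩ : ∃ u, φ u ≠ 0 := by
    by_contra hc; push_neg at hc; exact hφ (LinearMap.ext fun v => by simp [hc])
  refine ⟨ψ u / φ u, LinearMap.ext fun v => ?_⟩
  have hw : φ (v - (φ v / φ u) • u) = 0 := by
    simp only [map_sub, map_smul, smul_eq_mul]
    field_simp
    ring
  have hw' : ψ (v - (φ v / φ u) • u) = 0 := by
    have : v - (φ v / φ u) • u ∈ LinearMap.ker φ := hw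
    rw [h] at this; exact this
  have hq : ψ v = (φ v / φ u) * ψ u := by
    have := hw'; simp only [map_sub, map_smul, smul_eq_mul, sub_eq_zero] at this; exact this
  simp only [LinearMap.smul_apply, smul_eq_mul, hq]
  field_simp

open scoped LinearAlgebra.Projectivization

noncomputable def fiberEquiv {V : Type} [AddCommGroup V] [Module F V] (P : ℙ F V) :
    Fˣ ≃ {v : {v : V // v ≠ 0} // Projectivization.mk' F v = P} := by
  refine Equiv.ofBijective (fun c => ⟨⟨(c : F) • P.rep,
      smul_ne_zero c.ne_zero (Projectivization.rep_nonzero P)⟩, ?_⟩) ⟨?_, ?_⟩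
  · rw [Projectivization.mk'_eq_mk]
    conv_rhs => rw [← Projectivization.mk_rep P]
    rw [Projectivization.mk_eq_mk_iff]
    exact ⟨c, rfl⟩
  · intro c c' h
    have h2 : (c : F) • P.rep = (c' : F) • P.rep := congrArg (fun x => (x.1 : V)) h
    have := sub_eq_zero.2 h2
    rw [← sub_smul, smul_eq_zero] at this
    rcases this with h | h
    · exact Units.ext (by rwa [sub_eq_zero] at h)
    · exact absurd h (Projectivization.rep_nonzero P)
  · rintro ⟨⟨v, hv⟩, hP⟩
    rw [Projectivization.mk'_eq_mk] at hP
    conv_rhs at hP => rw [← Projectivization.mk_rep P]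
    rw [Projectivization.mk_eq_mk_iff] at hP
    obtain ⟨a, ha⟩ := hP
    exact ⟨a, Subtype.ext (Subtype.ext ha)⟩

lemma card_proj_mul (V : Type) [AddCommGroup V] [Module F V] [Fintype V] :
    Nat.card (ℙ F V) * (Fintype.card F - 1) = Fintype.card V - 1 := by
  classical
  have hfin : Finite (ℙ F V) := Quotient.finite _
  have fP : Fintype (ℙ F V) := Fintype.ofFinite _
  have e1 : {v : V // v ≠ 0} ≃ Σ P : ℙ F V,
      {v : {v : V // v ≠ 0} // Projectivization.mk' F v = P} :=
    (Equiv.sigmaFiberEquiv _).symm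
  have h1 : Fintype.card {v : V // v ≠ 0} = Fintype.card V - 1 := by
    simp [Fintype.card_subtype_compl]
  have h2 : Fintype.card {v : V // v ≠ 0}
      = Nat.card (ℙ F V) * (Fintype.card F - 1) := by
    rw [Fintype.card_congr e1, Fintype.card_sigma]
    have : ∀ P : ℙ F V, Fintype.card {v : {v : V // v ≠ 0} // Projectivization.mk' F v = P}
        = Fintype.card F - 1 := by
      intro P
      rw [← Fintype.card_congr (fiberEquiv P), Fintype.card_units]
    simp only [this, Finset.sum_const, Finset.card_univ, smul_eq_mul, Nat.card_eq_fintype_card]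
  omega

lemma card_proj (V : Type) [AddCommGroup V] [Module F V] [Fintype V] :
    Nat.card (ℙ F V) = vv (Fintype.card F) (Module.finrank F V) := by
  have hq : 1 < Fintype.card F := Fintype.one_lt_card
  apply Nat.eq_of_mul_eq_mul_right (show 0 < Fintype.card F - 1 by omega)
  rw [card_proj_mul, vv_mul _ _ (by omega), card_eq_pow_finrank (K := F)]

lemma ker_finrank {V : Type} [AddCommGroup V] [Module F V] [Fintype V] {d : ℕ}
    (hd : Module.finrank F V = d + 1) (φ : Module.Dual F V) (hφ : φ ≠ 0) :
    Module.finrank F (LinearMap.ker φ) = d := by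
  have h1 := LinearMap.finrank_range_add_finrank_ker φ
  have h2 : Module.finrank F (LinearMap.range φ) = 1 := by
    have hle : Module.finrank F (LinearMap.range φ) ≤ 1 := by
      have := Submodule.finrank_le (LinearMap.range φ)
      rwa [Module.finrank_self] at this
    have hne : LinearMap.range φ ≠ ⊥ := fun h => hφ (LinearMap.range_eq_bot.mp h)
    have h3 : Module.finrank F (LinearMap.range φ) ≠ 0 :=
      fun h => hne (Submodule.finrank_eq_zero.mp h)
    omega
  omega

noncomputable def hyperplaneEquiv (V : Type) [AddCommGroup V] [Module F V] [Fintype V] {d : ℕ}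
    (hd : Module.finrank F V = d + 1) :
    ℙ F (Module.Dual F V) ≃ {H : Submodule F V // Module.finrank F H = d} := by
  refine Equiv.ofBijective
    (fun P => ⟨LinearMap.ker P.rep, ker_finrank hd P.rep (Projectivization.rep_nonzero P)⟩)
    ⟨?_, ?_⟩
  · intro P Q h
    simp only [Subtype.mk.injEq] at h
    obtain ⟨c, hc⟩ := prop_ker P.rep Q.rep (Projectivization.rep_nonzero P) h
    have hcne : c ≠ 0 := by
      rintro rfl
      rw [zero_smul] at hc
      exact Projectivization.rep_nonzero Q hc
    conv_lhs => rw [← Projectivization.mk_rep P]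
    conv_rhs => rw [← Projectivization.mk_rep Q]
    rw [Projectivization.mk_eq_mk_iff']
    exact ⟨c⁻¹, by rw [hc, inv_smul_smul₀ hcne]⟩
  · rintro ⟨H, hH⟩
    have hq : Module.finrank F (V ⧸ H) = 1 := by
      have := H.finrank_quotient_add_finrank
      omega
    obtain ⟨e⟩ := FiniteDimensional.nonempty_linearEquiv_of_finrank_eq
      (hq.trans (Module.finrank_self F).symm)
    set φ : Module.Dual F V := e.toLinearMap ∘ₗ H.mkQ with hφdef
    have hker : LinearMap.ker φ = H := by
      rw [hφdef, LinearMap.ker_comp, LinearEquiv.ker, Submodule.comap_bot, Submodule.ker_mkQ]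
    have hφ : φ ≠ 0 := by
      intro h0
      have : LinearMap.ker φ = ⊤ := by rw [h0]; exact LinearMap.ker_zero
      rw [hker] at this
      rw [this, finrank_top, hd] at hH
      omega
    refine ⟨Projectivization.mk F φ hφ, ?_⟩
    obtain ⟨a, ha⟩ := (Projectivization.mk_eq_mk_iff F _ _
      (Projectivization.rep_nonzero (Projectivization.mk F φ hφ)) hφ).mp
      (Projectivization.mk_rep (Projectivization.mk F φ hφ))
    apply Subtype.ext
    simp only
    rw [← ha, ← hker]
    exact LinearMap.ker_smul _ _ (Units.ne_zero a)

lemma card_hyperplanes (V : Type) [AddCommGroup V] [Module F V] [Fintype V] {d : ℕ}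
    (hd : Module.finrank F V = d + 1) :
    Nat.card {H : Submodule F V // Module.finrank F H = d} = vv (Fintype.card F) (d + 1) := by
  haveI : Finite (Module.Dual F V) :=
    Finite.of_injective (fun φ => (φ : V → F)) (fun _ _ h => LinearMap.ext fun x => congrFun h x)
  haveI : Fintype (Module.Dual F V) := Fintype.ofFinite _
  rw [← Nat.card_congr (hyperplaneEquiv V hd), card_proj, Subspace.dual_finrank_eq, hd]

lemma finrank_comap_mkQ {V : Type} [AddCommGroup V] [Module F V] [Fintype V]
    (W : Submodule F V) (H' : Submodule F (V ⧸ W)) :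
    Module.finrank F (Submodule.comap W.mkQ H')
      = Module.finrank F H' + Module.finrank F W := by
  set U' := Submodule.comap W.mkQ H' with hU'
  have hWU : W ≤ U' := fun x hx => by
    show W.mkQ x ∈ H'
    rw [show W.mkQ x = 0 from (Submodule.Quotient.mk_eq_zero W).mpr hx]
    exact H'.zero_mem
  have f := W.mkQ.domRestrict U'
  have hrange : LinearMap.range (W.mkQ.domRestrict U') = H' := by
    rw [LinearMap.range_domRestrict]
    exact Submodule.map_comap_eq_self (by rw [Submodule.range_mkQ]; exact le_top)
  have hker : LinearMap.ker (W.mkQ.domRestrict U') = Submodule.comap U'.subtype W := by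
    ext x
    simp [LinearMap.mem_ker, LinearMap.domRestrict_apply, Submodule.Quotient.mk_eq_zero,
      Submodule.mkQ_apply]
  have hrn := LinearMap.finrank_range_add_finrank_ker (W.mkQ.domRestrict U')
  rw [hrange, hker] at hrn
  rw [← hrn, (Submodule.comapSubtypeEquivOfLe hWU).finrank_eq]

lemma card_hyperplanes_above {V : Type} [AddCommGroup V] [Module F V] [Fintype V] {d k : ℕ}
    (hV : Module.finrank F V = d + 1) (W : Submodule F V)
    (hW : Module.finrank F W = k) (hk : k ≤ d + 1) :
    Nat.card {H : Submodule F V // Module.finrank F H = d ∧ W ≤ H}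
      = vv (Fintype.card F) (d + 1 - k) := by
  rcases eq_or_lt_of_le hk with heq | hlt
  · have hWtop : W = ⊤ := Submodule.eq_top_of_finrank_eq (by rw [hW, hV, heq])
    have : IsEmpty {H : Submodule F V // Module.finrank F H = d ∧ W ≤ H} := by
      constructor
      rintro ⟨H, hH, hWH⟩
      rw [hWtop, top_le_iff] at hWH
      rw [hWH, finrank_top, hV] at hH
      omega
    rw [Nat.card_of_isEmpty, heq, Nat.sub_self]
    simp [vv]
  · set u := d - k with hu
    have hfq : Module.finrank F (V ⧸ W) = u + 1 := by
      have := W.finrank_quotient_add_finrank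
      rw [hV, hW] at this
      omega
    haveI : Finite (V ⧸ W) := Quotient.finite _
    haveI : Fintype (V ⧸ W) := Fintype.ofFinite _
    have e : {H' : Submodule F (V ⧸ W) // Module.finrank F H' = u}
        ≃ {H : Submodule F V // Module.finrank F H = d ∧ W ≤ H} := by
      refine Equiv.ofBijective (fun H' => ⟨Submodule.comap W.mkQ H', ?_, ?_⟩) ⟨?_, ?_⟩
      · rw [finrank_comap_mkQ, H'.2, hW]; omega
      · intro x hx
        show W.mkQ x ∈ (H' : Submodule F (V ⧸ W))
        rw [show W.mkQ x = 0 from (Submodule.Quotient.mk_eq_zero W).mpr hx]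
        exact Submodule.zero_mem _
      · intro H₁ H₂ h
        simp only [Subtype.mk.injEq] at h
        exact Subtype.ext (Submodule.comap_injective_of_surjective W.mkQ_surjective h)
      · rintro ⟨H, hH, hWH⟩
        have hcm : Submodule.comap W.mkQ (Submodule.map W.mkQ H) = H := by
          rw [Submodule.comap_map_eq, Submodule.ker_mkQ, sup_eq_left.mpr hWH]
        have hfr : Module.finrank F (Submodule.map W.mkQ H) = u := by
          have := finrank_comap_mkQ W (Submodule.map W.mkQ H)
          rw [hcm, hH, hW] at this
          omega
        exact ⟨⟨Submodule.map W.mkQ H, hfr⟩, Subtype.ext hcm⟩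
    rw [← Nat.card_congr e, card_hyperplanes (V ⧸ W) hfq]
    congr 1
    omega

end Aux


/-- lower bound on the multiplicity of an `s`-dimensional subspace
of an `(n,w)`-minihyper in `PG(r,q)`. -/
theorem stmt0 {F : Type} [Field F] [Fintype F] {r : ℕ} (hr : 1 ≤ r)
    (K : PGPt F (r + 1) → ℕ) (n w : ℕ) (hK : IsMinihyper K n w)
    (s : ℕ) (hs : s ≤ r - 1) (S : Submodule F (Fin (r + 1) → F))
    (hS : Module.finrank F S = s + 1) :
    (⌈(((vv (Fintype.card F) (r - s) * w : ℕ) : ℚ)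
        - ((vv (Fintype.card F) (r - s - 1) * n : ℕ) : ℚ))
        / ((Fintype.card F : ℚ) ^ (r - s - 1))⌉ : ℤ) ≤ (fm K S : ℤ) := by
  classical
  obtain ⟨htot, hlow, -⟩ := hK
  have hq2 : 2 ≤ Fintype.card F := Fintype.one_lt_card
  haveI : Finite (PGPt F (r + 1)) := Quotient.finite _
  haveI : Fintype (PGPt F (r + 1)) := Fintype.ofFinite _
  haveI : Finite (Submodule F (Fin (r + 1) → F)) :=
    Finite.of_injective (fun W => (W : Set (Fin (r + 1) → F))) SetLike.coe_injective
  haveI : Fintype (Submodule F (Fin (r + 1) → F)) := Fintype.ofFinite _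
  have hsr : s + 1 ≤ r := by omega
  have hrV : Module.finrank F (Fin (r + 1) → F) = r + 1 := by
    simp
  have fm_eq : ∀ W : Submodule F (Fin (r + 1) → F),
      fm K W = ∑ P ∈ Finset.univ.filter (fun P : PGPt F (r + 1) => P.submodule ≤ W), K P := by
    intro W
    rw [fm, ← finsum_mem_coe_finset]
    congr 1
    ext P
    simp
  set 𝓗 : Finset (Submodule F (Fin (r + 1) → F)) :=
    Finset.univ.filter (fun H => Module.finrank F H = r ∧ S ≤ H) with h𝓗
  have hcard : 𝓗.card = vv (Fintype.card F) (r - s) := by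
    rw [h𝓗, ← Fintype.card_subtype, ← Nat.card_eq_fintype_card]
    have := card_hyperplanes_above (V := Fin (r + 1) → F) (d := r) (k := s + 1)
      hrV S hS (by omega)
    rw [this]
    congr 1
    omega
  have hcount : ∀ P : PGPt F (r + 1),
      (𝓗.filter (fun H => P.submodule ≤ H)).card
        = if P.submodule ≤ S then vv (Fintype.card F) (r - s)
          else vv (Fintype.card F) (r - s - 1) := by
    intro P
    by_cases hPS : P.submodule ≤ S
    · rw [if_pos hPS, Finset.filter_true_of_mem, hcard]
      intro H hH
      rw [h𝓗, Finset.mem_filter] at hH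
      exact le_trans hPS hH.2.2
    · rw [if_neg hPS]
      have hfil : 𝓗.filter (fun H => P.submodule ≤ H)
          = Finset.univ.filter
              (fun H : Submodule F (Fin (r + 1) → F) =>
                Module.finrank F H = r ∧ (S ⊔ P.submodule) ≤ H) := by
        ext H
        simp only [h𝓗, Finset.mem_filter, Finset.mem_univ, true_and, sup_le_iff,
          Finset.filter_filter]
        tauto
      have hib : S ⊓ P.submodule = ⊥ := by
        by_contra hne
        have hle : S ⊓ P.submodule ≤ P.submodule := inf_le_right
        have h1 : Module.finrank F (S ⊓ P.submodule : Submodule F _) ≠ 0 := fun h =>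
          hne (Submodule.finrank_eq_zero.mp h)
        have h2 : Module.finrank F P.submodule
            ≤ Module.finrank F (S ⊓ P.submodule : Submodule F _) := by
          rw [P.finrank_submodule]
          omega
        have := Submodule.eq_of_le_of_finrank_le hle h2
        exact hPS (this ▸ inf_le_left)
      have hsupr : Module.finrank F (S ⊔ P.submodule : Submodule F _) = s + 2 := by
        have := Submodule.finrank_sup_add_finrank_inf_eq S P.submodule
        rw [hib, hS, P.finrank_submodule] at this
        simpa using this
      rw [hfil, ← Fintype.card_subtype, ← Nat.card_eq_fintype_card]
      have := card_hyperplanes_above (V := Fin (r + 1) → F) (d := r) (k := s + 2)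
        hrV (S ⊔ P.submodule) hsupr (by omega)
      rw [this]
      congr 1
      omega
  have hsum : ∑ H ∈ 𝓗, fm K H
      = ∑ P : PGPt F (r + 1), (𝓗.filter (fun H => P.submodule ≤ H)).card * K P := by
    calc ∑ H ∈ 𝓗, fm K H
        = ∑ H ∈ 𝓗, ∑ P : PGPt F (r + 1), if P.submodule ≤ H then K P else 0 := by
          refine Finset.sum_congr rfl fun H _ => ?_
          rw [fm_eq H, Finset.sum_filter]
      _ = ∑ P : PGPt F (r + 1), ∑ H ∈ 𝓗, if P.submodule ≤ H then K P else 0 :=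
          Finset.sum_comm
      _ = ∑ P : PGPt F (r + 1), (𝓗.filter (fun H => P.submodule ≤ H)).card * K P := by
          refine Finset.sum_congr rfl fun P _ => ?_
          rw [← Finset.sum_filter, Finset.sum_const, smul_eq_mul]
  set A := fm K S with hA
  have hAeq : A = ∑ P ∈ Finset.univ.filter
      (fun P : PGPt F (r + 1) => P.submodule ≤ S), K P := fm_eq S
  set B := ∑ P ∈ Finset.univ.filter
      (fun P : PGPt F (r + 1) => ¬ P.submodule ≤ S), K P with hB
  have hAB : A + B = n := by
    have huniv : n = ∑ P : PGPt F (r + 1), K P := by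
      rw [← htot, fm_eq ⊤]
      exact Finset.sum_congr (by ext P; simp) (fun _ _ => rfl)
    rw [huniv, hAeq, hB]
    exact Finset.sum_filter_add_sum_filter_not _ _ _
  have h1 : 𝓗.card * w ≤ ∑ H ∈ 𝓗, fm K H := by
    rw [← smul_eq_mul]
    apply Finset.card_nsmul_le_sum
    intro H hH
    rw [h𝓗, Finset.mem_filter] at hH
    exact hlow H (by rw [hH.2.1]; omega)
  have h2 : ∑ H ∈ 𝓗, fm K H
      = vv (Fintype.card F) (r - s) * A + vv (Fintype.card F) (r - s - 1) * B := by
    rw [hsum,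
      ← Finset.sum_filter_add_sum_filter_not Finset.univ
        (fun P : PGPt F (r + 1) => P.submodule ≤ S)]
    congr 1
    · rw [hAeq, Finset.mul_sum]
      refine Finset.sum_congr rfl fun P hP => ?_
      rw [hcount P, if_pos (Finset.mem_filter.mp hP).2]
    · rw [hB, Finset.mul_sum]
      refine Finset.sum_congr rfl fun P hP => ?_
      rw [hcount P, if_neg (Finset.mem_filter.mp hP).2]
  have h3 : vv (Fintype.card F) (r - s)
      = vv (Fintype.card F) (r - s - 1) + (Fintype.card F) ^ (r - s - 1) := by
    have ht : r - s = (r - s - 1) + 1 := by omega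
    rw [ht]
    simp [vv, Finset.sum_range_succ]
  have hmain : vv (Fintype.card F) (r - s) * w
      ≤ vv (Fintype.card F) (r - s - 1) * n + (Fintype.card F) ^ (r - s - 1) * A := by
    have h4 : vv (Fintype.card F) (r - s) * A + vv (Fintype.card F) (r - s - 1) * B
        = vv (Fintype.card F) (r - s - 1) * n + (Fintype.card F) ^ (r - s - 1) * A := by
      rw [h3, ← hAB]
      ring
    rw [hcard] at h1
    omega
  rw [Int.ceil_le]
  have hqpos : (0 : ℚ) < (Fintype.card F : ℚ) ^ (r - s - 1) := by
    have : (0 : ℚ) < (Fintype.card F : ℚ) := by exact_mod_cast (by omega : 0 < Fintype.card F)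
    positivity
  rw [div_le_iff₀ hqpos]
  have hc : ((vv (Fintype.card F) (r - s) * w : ℕ) : ℚ)
      ≤ ((vv (Fintype.card F) (r - s - 1) * n + (Fintype.card F) ^ (r - s - 1) * A : ℕ) : ℚ) :=
    Nat.cast_le.mpr hmain
  push_cast at hc ⊢
  linarith
end
end

section
/- Let K be an (n,n−d)-arc in PG(k−1,q) with n = t + g_q(k,d), where g_q(k,d) = Σ_{i=0}^{k−1} ⌈d/q^i⌉ is the Griesmer bound. Then for every j-dimensional flat δ of PG(k−1,q) (0 ≤ j ≤ k−1), K(δ) ≤ t + Σ_{i=k−1−j}^{k−1} ⌈d/q^i⌉. -/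
open scoped BigOperators

noncomputable section

/-- The Griesmer bound `g_q(k,d) = Σ_{i=0}^{k-1} ⌈d/q^i⌉`. -/
def griesmer (q k d : ℕ) : ℕ := ∑ i ∈ Finset.range k, ⌈(d : ℚ) / (q : ℚ) ^ i⌉₊


open Module Finset

attribute [local instance] Classical.propDecidable

set_option linter.unusedSectionVars false

namespace Stmt3Aux

variable {F : Type} [Field F] [Fintype F] {k : ℕ}

instance : Finite (PGPt F k) := Quotient.finite _

def ptsIn (W : Submodule F (Fin k → F)) : Finset (PGPt F k) :=
  (Set.toFinite {P : PGPt F k | P.submodule ≤ W}).toFinset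

lemma mem_ptsIn {P : PGPt F k} {W : Submodule F (Fin k → F)} :
    P ∈ ptsIn W ↔ P.submodule ≤ W := Set.Finite.mem_toFinset _

lemma submodule_le_iff {P : PGPt F k} {W : Submodule F (Fin k → F)} :
    P.submodule ≤ W ↔ P.rep ∈ W := by
  rw [Projectivization.submodule_eq, Submodule.span_singleton_le_iff_mem]

lemma card_sdiff_mul {V U : Submodule F (Fin k → F)} (hVU : V ≤ U) :
    (ptsIn U \ ptsIn V).card * (Fintype.card F - 1)
      = Fintype.card F ^ finrank F U - Fintype.card F ^ finrank F V := by
  set q := Fintype.card F with hq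
  set A : Finset (Fin k → F) := univ.filter (fun v => v ∈ U ∧ v ∉ V) with hA
  have cardU : ∀ X : Submodule F (Fin k → F),
      (univ.filter (fun v => v ∈ X)).card = q ^ finrank F X := by
    intro X
    rw [← Fintype.card_subtype]
    exact card_eq_pow_finrank
  have hsub : univ.filter (fun v => v ∈ V) ⊆ univ.filter (fun v => v ∈ U) := by
    intro v hv
    simp only [mem_filter, mem_univ, true_and] at *
    exact hVU hv
  have hA1 : A.card = q ^ finrank F U - q ^ finrank F V := by
    have he : A = univ.filter (fun v => v ∈ U) \ univ.filter (fun v => v ∈ V) := by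
      ext v; simp [hA]
    rw [he, card_sdiff_of_subset hsub, cardU, cardU]
  have hA2 : A.card = (ptsIn U \ ptsIn V).card * (q - 1) := by
    set D := ptsIn U \ ptsIn V with hD
    have hmemD : ∀ P : PGPt F k, P ∈ D ↔ P.submodule ≤ U ∧ ¬ P.submodule ≤ V := by
      intro P; simp [hD, mem_sdiff, mem_ptsIn]
    have hbi : A = D.biUnion (fun P => A.filter (fun v => v ∈ P.submodule)) := by
      ext v
      simp only [mem_biUnion]
      constructor
      · intro hv
        have hv' := (mem_filter.mp hv).2
        have hv0 : v ≠ 0 := fun h => hv'.2 (h ▸ V.zero_mem)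
        refine ⟨Projectivization.mk F v hv0, ?_, ?_⟩
        · rw [hmemD, Projectivization.submodule_mk]
          exact ⟨(Submodule.span_singleton_le_iff_mem _ _).mpr hv'.1,
            fun hle => hv'.2 ((Submodule.span_singleton_le_iff_mem _ _).mp hle)⟩
        · exact mem_filter.mpr ⟨hv, by
            rw [Projectivization.submodule_mk]
            exact Submodule.mem_span_singleton_self v⟩
      · rintro ⟨P, _, hv⟩
        exact (mem_filter.mp hv).1
    have hdisj : ∀ P ∈ D, ∀ Q ∈ D, P ≠ Q →
        Disjoint (A.filter (fun v => v ∈ P.submodule)) (A.filter (fun v => v ∈ Q.submodule)) := by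
      intro P _ Q _ hPQ
      rw [Finset.disjoint_left]
      intro v hvP hvQ
      have hvA := (mem_filter.mp hvP).1
      have hv0 : v ≠ 0 := fun h => ((mem_filter.mp hvA).2).2 (h ▸ V.zero_mem)
      apply hPQ
      apply Projectivization.submodule_injective
      have e1 : P.submodule = F ∙ v := by
        refine ((Submodule.eq_of_le_of_finrank_le
          ((Submodule.span_singleton_le_iff_mem _ _).mpr (mem_filter.mp hvP).2) ?_)).symm
        rw [P.finrank_submodule, finrank_span_singleton hv0]
      have e2 : Q.submodule = F ∙ v := by
        refine ((Submodule.eq_of_le_of_finrank_le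
          ((Submodule.span_singleton_le_iff_mem _ _).mpr (mem_filter.mp hvQ).2) ?_)).symm
        rw [Q.finrank_submodule, finrank_span_singleton hv0]
      rw [e1, e2]
    have hfib : ∀ P ∈ D, (A.filter (fun v => v ∈ P.submodule)).card = q - 1 := by
      intro P hP
      rw [hmemD] at hP
      have hrepU : P.rep ∈ U := submodule_le_iff.mp hP.1
      have hrepV : P.rep ∉ V := fun h => hP.2 (submodule_le_iff.mpr h)
      have he : A.filter (fun v => v ∈ P.submodule)
          = (univ.erase (0 : F)).image (fun c => c • P.rep) := by
        ext v
        simp only [mem_filter, mem_image, mem_erase, mem_univ, and_true, hA, true_and]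
        constructor
        · rintro ⟨⟨hvU, hvV⟩, hvP⟩
          rw [Projectivization.submodule_eq, Submodule.mem_span_singleton] at hvP
          obtain ⟨c, rfl⟩ := hvP
          have hc : c ≠ 0 := fun h => hvV (by simp [h])
          exact ⟨c, hc, rfl⟩
        · rintro ⟨c, hc, rfl⟩
          refine ⟨⟨U.smul_mem c hrepU, ?_⟩, ?_⟩
          · intro hmem
            apply hrepV
            have := V.smul_mem c⁻¹ hmem
            rwa [smul_smul, inv_mul_cancel₀ hc, one_smul] at this
          · rw [Projectivization.submodule_eq]
            exact Submodule.smul_mem _ _ (Submodule.mem_span_singleton_self _)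
      rw [he, card_image_of_injective _ (smul_left_injective F P.rep_nonzero),
        card_erase_of_mem (mem_univ _), card_univ]
    rw [hbi, card_biUnion hdisj, sum_congr rfl hfib, sum_const, smul_eq_mul]
  omega

lemma finrank_sup_point {P : PGPt F k} {V : Submodule F (Fin k → F)}
    (h : ¬ P.submodule ≤ V) : finrank F ↥(V ⊔ P.submodule) = finrank F V + 1 := by
  have hrep : P.rep ∉ V := fun hm => h (submodule_le_iff.mpr hm)
  have hv0 : P.rep ≠ 0 := P.rep_nonzero
  have hinf : V ⊓ (F ∙ P.rep) = ⊥ := by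
    rw [eq_bot_iff]
    rintro x ⟨hxU, hxv⟩
    obtain ⟨c, rfl⟩ := Submodule.mem_span_singleton.mp hxv
    rcases eq_or_ne c 0 with rfl | hc
    · simp
    · exfalso
      apply hrep
      have := V.smul_mem c⁻¹ hxU
      rwa [smul_smul, inv_mul_cancel₀ hc, one_smul] at this
  have h2 := Submodule.finrank_sup_add_finrank_inf_eq V (F ∙ P.rep)
  rw [hinf, finrank_span_singleton hv0, finrank_bot] at h2
  rw [Projectivization.submodule_eq]
  omega

lemma card_D_eq {V U : Submodule F (Fin k → F)} (hVU : V ≤ U)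
    (hr : finrank F U = finrank F V + 1) :
    (ptsIn U \ ptsIn V).card = Fintype.card F ^ finrank F V := by
  set q := Fintype.card F with hq
  have hq2 : 1 < q := Fintype.one_lt_card
  obtain ⟨m, hm⟩ : ∃ m, q = m + 2 := ⟨q - 2, by omega⟩
  apply Nat.eq_of_mul_eq_mul_right (show 0 < q - 1 by omega)
  rw [card_sdiff_mul hVU, hr, ← hq, show q - 1 = m + 1 by omega, pow_succ]
  apply Nat.sub_eq_of_eq_add
  rw [hm]
  ring

lemma card_S_le {V W : Submodule F (Fin k → F)} (hVW : V ≤ W)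
    (hrW : finrank F W = finrank F V + 2)
    (S : Finset (Submodule F (Fin k → F)))
    (hS : ∀ U ∈ S, V ≤ U ∧ U ≤ W ∧ finrank F U = finrank F V + 1) :
    S.card ≤ Fintype.card F + 1 := by
  set q := Fintype.card F with hq
  have hq2 : 1 < q := Fintype.one_lt_card
  obtain ⟨m, hm⟩ : ∃ m, q = m + 2 := ⟨q - 2, by omega⟩
  have hcard : ∀ U ∈ S, (ptsIn U \ ptsIn V).card = q ^ finrank F V := by
    intro U hU
    obtain ⟨h1, _, h3⟩ := hS U hU
    exact card_D_eq h1 h3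
  have hdisjU : ∀ U ∈ S, ∀ U' ∈ S, U ≠ U' →
      Disjoint (ptsIn U \ ptsIn V) (ptsIn U' \ ptsIn V) := by
    intro U hU U' hU' hne
    rw [Finset.disjoint_left]
    intro P hP hP'
    rw [mem_sdiff, mem_ptsIn, mem_ptsIn] at hP hP'
    apply hne
    have e1 : V ⊔ P.submodule = U := by
      apply Submodule.eq_of_le_of_finrank_le (sup_le (hS U hU).1 hP.1)
      rw [finrank_sup_point hP.2, (hS U hU).2.2]
    have e2 : V ⊔ P.submodule = U' := by
      apply Submodule.eq_of_le_of_finrank_le (sup_le (hS U' hU').1 hP'.1)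
      rw [finrank_sup_point hP'.2, (hS U' hU').2.2]
    rw [← e1, ← e2]
  have hsub : S.biUnion (fun U => ptsIn U \ ptsIn V) ⊆ ptsIn W \ ptsIn V := by
    intro P hP
    rw [mem_biUnion] at hP
    obtain ⟨U, hU, hPU⟩ := hP
    rw [mem_sdiff, mem_ptsIn, mem_ptsIn] at *
    exact ⟨hPU.1.trans (hS U hU).2.1, hPU.2⟩
  have h1 : S.card * q ^ finrank F V ≤ (ptsIn W \ ptsIn V).card := by
    calc S.card * q ^ finrank F V = ∑ U ∈ S, (ptsIn U \ ptsIn V).card := by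
          rw [sum_congr rfl hcard, sum_const, smul_eq_mul]
      _ = (S.biUnion (fun U => ptsIn U \ ptsIn V)).card := (card_biUnion hdisjU).symm
      _ ≤ _ := card_le_card hsub
  have h2 : (ptsIn W \ ptsIn V).card = q ^ finrank F V * (q + 1) := by
    apply Nat.eq_of_mul_eq_mul_right (show 0 < q - 1 by omega)
    rw [card_sdiff_mul hVW, hrW, ← hq, show q - 1 = m + 1 by omega, pow_succ, pow_succ]
    apply Nat.sub_eq_of_eq_add
    rw [hm]
    ring
  rw [h2] at h1
  have hpos : 0 < q ^ finrank F V := pow_pos (by omega) _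
  calc S.card ≤ q + 1 := by
        apply Nat.le_of_mul_le_mul_left _ hpos
        calc q ^ finrank F V * S.card = S.card * q ^ finrank F V := by ring
          _ ≤ q ^ finrank F V * (q + 1) := h1
  


instance : Finite (Submodule F (Fin k → F)) :=
  Finite.of_injective (fun U => (U : Set (Fin k → F))) SetLike.coe_injective

lemma fm_eq (K : PGPt F k → ℕ) (W : Submodule F (Fin k → F)) :
    fm K W = ∑ P ∈ ptsIn W, K P := finsum_mem_eq_finite_toFinset_sum _ _

lemma ptsIn_mono {V W : Submodule F (Fin k → F)} (h : V ≤ W) : ptsIn V ⊆ ptsIn W := by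
  intro P hP
  rw [mem_ptsIn] at *
  exact hP.trans h

lemma fm_mono (K : PGPt F k → ℕ) {V W : Submodule F (Fin k → F)} (h : V ≤ W) :
    fm K V ≤ fm K W := by
  rw [fm_eq, fm_eq]
  exact Finset.sum_le_sum_of_subset (ptsIn_mono h)

def fmd (K : PGPt F k → ℕ) (V U : Submodule F (Fin k → F)) : ℕ :=
  ∑ P ∈ ptsIn U \ ptsIn V, K P

lemma fm_split (K : PGPt F k → ℕ) {V U : Submodule F (Fin k → F)} (h : V ≤ U) :
    fm K U = fm K V + fmd K V U := by
  have h2 := Finset.sum_sdiff (f := K) (ptsIn_mono h)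
  rw [fm_eq, fm_eq, fmd]
  omega

lemma pencil (K : PGPt F k → ℕ) {V W U₀ : Submodule F (Fin k → F)}
    (hVW : V ≤ W) (hVU₀ : V ≤ U₀) (hU₀W : U₀ ≤ W)
    (hrW : finrank F W = finrank F V + 2) (hrU₀ : finrank F U₀ = finrank F V + 1) :
    ∃ S : Finset (Submodule F (Fin k → F)), U₀ ∈ S ∧ S.card ≤ Fintype.card F + 1 ∧
      (∀ U ∈ S, V ≤ U ∧ U ≤ W ∧ finrank F U = finrank F V + 1) ∧
      fmd K V W = ∑ U ∈ S, fmd K V U := by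
  set T := ptsIn W \ ptsIn V with hT
  set g : PGPt F k → Submodule F (Fin k → F) := fun P => V ⊔ P.submodule with hg
  set S := insert U₀ (T.image g) with hSdef
  have memT : ∀ P : PGPt F k, P ∈ T ↔ P.submodule ≤ W ∧ ¬ P.submodule ≤ V := by
    intro P; simp [hT, mem_sdiff, mem_ptsIn]
  have hSprop : ∀ U ∈ S, V ≤ U ∧ U ≤ W ∧ finrank F U = finrank F V + 1 := by
    intro U hU
    rcases mem_insert.mp hU with rfl | hU'
    · exact ⟨hVU₀, hU₀W, hrU₀⟩
    · obtain ⟨P, hP, rfl⟩ := mem_image.mp hU'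
      rw [memT] at hP
      exact ⟨le_sup_left, sup_le hVW hP.1, finrank_sup_point hP.2⟩
  refine ⟨S, mem_insert_self _ _, card_S_le hVW hrW S hSprop, hSprop, ?_⟩
  have hmap : ∀ P ∈ T, g P ∈ S := fun P hP => mem_insert_of_mem (mem_image_of_mem _ hP)
  have hfib := Finset.sum_fiberwise_of_maps_to hmap K
  rw [show fmd K V W = ∑ P ∈ T, K P from rfl, ← hfib]
  apply sum_congr rfl
  intro U hU
  obtain ⟨hVU, hUW, hrU⟩ := hSprop U hU
  have hfeq : T.filter (fun P => g P = U) = ptsIn U \ ptsIn V := by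
    ext P
    rw [mem_filter, memT, mem_sdiff, mem_ptsIn, mem_ptsIn]
    constructor
    · rintro ⟨⟨hPW, hPV⟩, hgP⟩
      have hle : P.submodule ≤ g P := le_sup_right
      rw [hgP] at hle
      exact ⟨hle, hPV⟩
    · rintro ⟨hPU, hPV⟩
      refine ⟨⟨hPU.trans hUW, hPV⟩, ?_⟩
      apply Submodule.eq_of_le_of_finrank_le (sup_le hVU hPU)
      rw [finrank_sup_point hPV, hrU]
  rw [hfeq]
  rfl

lemma exists_inter {δ W : Submodule F (Fin k → F)} (hδW : δ ≤ W) :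
    ∀ c : ℕ, finrank F δ + c ≤ finrank F W →
      ∃ U : Submodule F (Fin k → F), δ ≤ U ∧ U ≤ W ∧ finrank F U = finrank F δ + c := by
  intro c
  induction c with
  | zero => exact fun _ => ⟨δ, le_refl _, hδW, by omega⟩
  | succ c ih =>
    intro hc
    obtain ⟨U, hδU, hUW, hrU⟩ := ih (by omega)
    have hlt : U < W := lt_of_le_of_ne hUW (by
      intro h
      rw [h] at hrU
      omega)
    obtain ⟨v, hvW, hvU⟩ := SetLike.exists_of_lt hlt
    have hv0 : v ≠ 0 := fun h => hvU (h ▸ U.zero_mem)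
    have hinf : U ⊓ (F ∙ v) = ⊥ := by
      rw [eq_bot_iff]
      rintro x ⟨hxU, hxv⟩
      obtain ⟨c, rfl⟩ := Submodule.mem_span_singleton.mp hxv
      rcases eq_or_ne c 0 with rfl | hc
      · simp
      · exfalso
        apply hvU
        have hmem := U.smul_mem c⁻¹ hxU
        rwa [smul_smul, inv_mul_cancel₀ hc, one_smul] at hmem
    refine ⟨U ⊔ (F ∙ v), hδU.trans le_sup_left,
      sup_le hUW ((Submodule.span_singleton_le_iff_mem _ _).mpr hvW), ?_⟩
    have h2 := Submodule.finrank_sup_add_finrank_inf_eq U (F ∙ v)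
    rw [hinf, finrank_span_singleton hv0, finrank_bot] at h2
    omega

lemma ceil_div_pow {q : ℕ} (hq : 0 < q) (d i : ℕ) :
    ⌈((⌈(d : ℚ) / (q : ℚ)⌉₊ : ℚ)) / (q : ℚ) ^ i⌉₊ = ⌈(d : ℚ) / (q : ℚ) ^ (i + 1)⌉₊ := by
  have hq' : (0 : ℚ) < q := by exact_mod_cast hq
  apply le_antisymm
  · have hnat : ⌈(d : ℚ) / (q : ℚ)⌉₊ ≤ ⌈(d : ℚ) / (q : ℚ) ^ (i + 1)⌉₊ * q ^ i := by
      apply Nat.ceil_le.mpr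
      rw [div_le_iff₀ hq']
      have h1 := Nat.le_ceil ((d : ℚ) / (q : ℚ) ^ (i + 1))
      rw [div_le_iff₀ (by positivity)] at h1
      push_cast
      calc (d : ℚ) ≤ (⌈(d : ℚ) / (q : ℚ) ^ (i + 1)⌉₊ : ℚ) * (q : ℚ) ^ (i + 1) := h1
        _ = (⌈(d : ℚ) / (q : ℚ) ^ (i + 1)⌉₊ : ℚ) * (q : ℚ) ^ i * q := by ring
    apply Nat.ceil_le.mpr
    rw [div_le_iff₀ (by positivity)]
    calc (⌈(d : ℚ) / (q : ℚ)⌉₊ : ℚ)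
        ≤ ((⌈(d : ℚ) / (q : ℚ) ^ (i + 1)⌉₊ * q ^ i : ℕ) : ℚ) := by exact_mod_cast hnat
      _ = (⌈(d : ℚ) / (q : ℚ) ^ (i + 1)⌉₊ : ℚ) * (q : ℚ) ^ i := by push_cast; ring
  · apply Nat.ceil_le.mpr
    have h2 : (d : ℚ) / (q : ℚ) ^ (i + 1) = ((d : ℚ) / q) / (q : ℚ) ^ i := by
      rw [pow_succ, div_div, mul_comm]
    rw [h2]
    calc ((d : ℚ) / q) / (q : ℚ) ^ i
        ≤ ((⌈(d : ℚ) / (q : ℚ)⌉₊ : ℚ)) / (q : ℚ) ^ i := by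
          gcongr
          exact Nat.le_ceil _
      _ ≤ _ := Nat.le_ceil _

lemma key (K : PGPt F k → ℕ) :
    ∀ c d : ℕ, ∀ δ W : Submodule F (Fin k → F), δ ≤ W →
      finrank F W = finrank F δ + c →
      (∀ U : Submodule F (Fin k → F), δ ≤ U → U ≤ W → finrank F U + 1 = finrank F W →
        fm K U + d ≤ fm K W) →
      fm K δ + ∑ i ∈ Finset.range c, ⌈(d : ℚ) / (Fintype.card F : ℚ) ^ i⌉₊ ≤ fm K W := by
  intro c
  induction c with
  | zero =>
    intro d δ W hδW _ _
    simpa using fm_mono K hδW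
  | succ c ih =>
    intro d δ W hδW hrW hyp
    have hq0 : 0 < Fintype.card F := Fintype.card_pos
    have hq2 : 1 < Fintype.card F := Fintype.one_lt_card
    set q := Fintype.card F with hqdef
    obtain ⟨U₀, hU₀, hmax⟩ := Set.exists_max_image
      {U : Submodule F (Fin k → F) | δ ≤ U ∧ U ≤ W ∧ finrank F U = finrank F δ + c}
      (fm K) (Set.toFinite _) (exists_inter hδW c (by omega))
    obtain ⟨hδU₀, hU₀W, hrU₀⟩ := hU₀
    set d' := ⌈(d : ℚ) / (q : ℚ)⌉₊ with hd'def
    have ihyp : ∀ V : Submodule F (Fin k → F), δ ≤ V → V ≤ U₀ →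
        finrank F V + 1 = finrank F U₀ → fm K V + d' ≤ fm K U₀ := by
      intro V hδV hVU₀ hrV
      obtain ⟨S, hU₀S, hScard, hSprop, hsum⟩ :=
        pencil K (hVU₀.trans hU₀W) hVU₀ hU₀W (by omega) (by omega)
      have hfmU : ∀ U ∈ S, fmd K V U ≤ fmd K V U₀ := by
        intro U hU
        obtain ⟨hVU, hUW, hrU⟩ := hSprop U hU
        have h1 : fm K U ≤ fm K U₀ := hmax U ⟨hδV.trans hVU, hUW, by omega⟩
        have e1 := fm_split K hVU
        have e2 := fm_split K hVU₀
        omega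
      have hWU₀ : fm K U₀ + d ≤ fm K W := hyp U₀ hδU₀ hU₀W (by omega)
      have e1 := fm_split K (hVU₀.trans hU₀W)
      have e2 := fm_split K hVU₀
      have hsum' : fmd K V W ≤ fmd K V U₀ + (S.card - 1) * fmd K V U₀ := by
        rw [hsum, ← Finset.add_sum_erase _ _ hU₀S]
        have h3 : ∑ U ∈ S.erase U₀, fmd K V U ≤ (S.erase U₀).card • fmd K V U₀ :=
          Finset.sum_le_card_nsmul _ _ _ (fun U hU => hfmU U (mem_of_mem_erase hU))
        rw [card_erase_of_mem hU₀S, smul_eq_mul] at h3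
        omega
      have h3 : fmd K V U₀ + d ≤ fmd K V W := by omega
      have h4 : d ≤ (S.card - 1) * fmd K V U₀ := by omega
      have h5 : d ≤ q * fmd K V U₀ :=
        h4.trans (Nat.mul_le_mul_right _ (by omega))
      have hd' : d' ≤ fmd K V U₀ := by
        rw [hd'def]
        apply Nat.ceil_le.mpr
        rw [div_le_iff₀ (by positivity)]
        calc (d : ℚ) ≤ ((q * fmd K V U₀ : ℕ) : ℚ) := by exact_mod_cast h5
          _ = (fmd K V U₀ : ℚ) * q := by push_cast; ring
      omega
    have hIH := ih d' δ U₀ hδU₀ (by omega) ihyp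
    have hfinal := hyp U₀ hδU₀ hU₀W (by omega)
    have hsumeq : ∑ i ∈ Finset.range (c + 1), ⌈(d : ℚ) / (q : ℚ) ^ i⌉₊
        = d + ∑ i ∈ Finset.range c, ⌈(d' : ℚ) / (q : ℚ) ^ i⌉₊ := by
      rw [Finset.sum_range_succ']
      rw [show ⌈(d : ℚ) / (q : ℚ) ^ 0⌉₊ = d by simp]
      rw [add_comm]
      congr 1
      apply sum_congr rfl
      intro i _
      rw [hd'def, ceil_div_pow hq0 d i]
    omega

end Stmt3Aux

/-- bound on the multiplicity of `j`-dimensional flats for an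
`(n, n-d)`-arc in `PG(k-1, q)` with `n = t + g_q(k,d)`. -/
theorem stmt3 {F : Type} [Field F] [Fintype F] {k : ℕ} (hk : 1 ≤ k)
    (K : PGPt F k → ℕ) (n d t : ℕ) (hArc : IsArc K n (n - d))
    (hn : n = t + griesmer (Fintype.card F) k d)
    (j : ℕ) (hj : j ≤ k - 1) (δ : Submodule F (Fin k → F))
    (hδ : Module.finrank F δ = j + 1) :
    fm K δ ≤ t + ∑ i ∈ Finset.Icc (k - 1 - j) (k - 1),
      ⌈(d : ℚ) / (Fintype.card F : ℚ) ^ i⌉₊ := by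
  classical
  obtain ⟨htot, hhyp, -⟩ := hArc
  have hq2 : 1 < Fintype.card F := Fintype.one_lt_card
  have hdn : d ≤ n := by
    have h0 : d ≤ griesmer (Fintype.card F) k d := by
      rw [griesmer]
      calc d = ⌈(d : ℚ) / (Fintype.card F : ℚ) ^ 0⌉₊ := by simp
        _ ≤ _ := Finset.single_le_sum (f := fun i => ⌈(d : ℚ) / (Fintype.card F : ℚ) ^ i⌉₊)
            (fun i _ => Nat.zero_le _) (Finset.mem_range.mpr (by omega))
    omega
  have hrtop : Module.finrank F (⊤ : Submodule F (Fin k → F)) = k := by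
    rw [finrank_top, Module.finrank_fin_fun]
  have happ := Stmt3Aux.key K (k - 1 - j) d δ ⊤ le_top
    (by rw [hrtop, hδ]; omega) ?_
  · rw [htot, hn, griesmer] at happ
    have hsplit : ∑ i ∈ Finset.range k, ⌈(d : ℚ) / (Fintype.card F : ℚ) ^ i⌉₊
        = ∑ i ∈ Finset.range (k - 1 - j), ⌈(d : ℚ) / (Fintype.card F : ℚ) ^ i⌉₊
          + ∑ i ∈ Finset.Ico (k - 1 - j) k, ⌈(d : ℚ) / (Fintype.card F : ℚ) ^ i⌉₊ :=
      (Finset.sum_range_add_sum_Ico _ (by omega)).symm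
    have hIcc : Finset.Icc (k - 1 - j) (k - 1) = Finset.Ico (k - 1 - j) k := by
      rw [← Finset.Ico_add_one_right_eq_Icc]
      congr 1
      omega
    rw [hIcc]
    omega
  · intro U _ _ hrU
    rw [hrtop] at hrU
    have hU1 : Module.finrank F U = k - 1 := by omega
    have h1 := hhyp U hU1
    rw [htot]
    omega

end
end

section
/- If K is an (n, n−d)-arc in PG(k−1,q) meeting the Griesmer bound (n = g_q(k,d)), then the maximal point multiplicity of K is at most ⌈d/q^{k−1}⌉. -/
open scoped BigOperators Classical

noncomputable section

section ceil

lemma ceil_nat_div_le_iff (a m t : ℕ) (hm : 0 < m) : ⌈(a:ℚ)/m⌉₊ ≤ t ↔ a ≤ t * m := by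
  rw [Nat.ceil_le, div_le_iff₀ (by exact_mod_cast hm)]
  exact_mod_cast Iff.rfl

lemma ceil_pow_le_iff (a q i t : ℕ) (hq : 0 < q) : ⌈(a:ℚ)/(q:ℚ)^i⌉₊ ≤ t ↔ a ≤ t * q^i := by
  rw [show ((q:ℚ))^i = ((q^i : ℕ) : ℚ) by push_cast; ring]
  exact ceil_nat_div_le_iff a (q^i) t (pow_pos hq i)

lemma ceil_pow_zero (a q : ℕ) : ⌈(a:ℚ)/(q:ℚ)^0⌉₊ = a := by
  simp

lemma ceil_comp (d q i : ℕ) (hq : 0 < q) :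
    ⌈((⌈(d:ℚ)/q⌉₊ : ℚ))/(q:ℚ)^i⌉₊ = ⌈(d:ℚ)/(q:ℚ)^(i+1)⌉₊ := by
  have key : ∀ t, (⌈((⌈(d:ℚ)/q⌉₊ : ℚ))/(q:ℚ)^i⌉₊ ≤ t ↔ ⌈(d:ℚ)/(q:ℚ)^(i+1)⌉₊ ≤ t) := by
    intro t
    rw [ceil_pow_le_iff _ q i t hq, ceil_pow_le_iff d q (i+1) t hq]
    have : (⌈(d:ℚ)/q⌉₊ ≤ t * q^i) ↔ d ≤ (t * q^i) * q := by
      simpa using ceil_nat_div_le_iff d q (t * q^i) hq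
    rw [this, pow_succ]; ring_nf
  exact le_antisymm ((key _).mpr le_rfl) ((key _).mp le_rfl)

lemma griesmer_succ' (q k d : ℕ) (hq : 0 < q) :
    griesmer q (k+1) d = d + griesmer q k (⌈(d:ℚ)/q⌉₊) := by
  rw [griesmer, griesmer, Finset.sum_range_succ']
  rw [ceil_pow_zero d q, add_comm]
  congr 1
  exact Finset.sum_congr rfl fun i _ => (ceil_comp d q i hq).symm

lemma griesmer_succ (q k d : ℕ) : griesmer q (k+1) d = griesmer q k d + ⌈(d:ℚ)/(q:ℚ)^k⌉₊ :=
  Finset.sum_range_succ _ _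

lemma d_le_griesmer (q k d : ℕ) (hq : 0 < q) (hk : 1 ≤ k) : d ≤ griesmer q k d := by
  obtain ⟨j, rfl⟩ := Nat.exists_eq_add_of_le hk
  induction j with
  | zero => rw [griesmer_succ' q 0 d hq]; simp [griesmer]
  | succ j ih => rw [show 1 + (j+1) = (1+j)+1 by ring, griesmer_succ]; omega

end ceil

section fmV
open Module Submodule Finset

variable {F : Type} [Field F] [Fintype F]

lemma finiteV (F V : Type) [Field F] [Fintype F] [AddCommGroup V] [Module F V]
    [FiniteDimensional F V] : Finite V := Module.finite_of_finite (R := F)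

lemma finitePGV (F V : Type) [Field F] [Fintype F] [AddCommGroup V] [Module F V]
    [FiniteDimensional F V] : Finite (Projectivization F V) := by
  haveI := finiteV F V; exact Quotient.finite _

lemma finiteSub (F V : Type) [Field F] [Fintype F] [AddCommGroup V] [Module F V]
    [FiniteDimensional F V] : Finite (Submodule F V) := by
  haveI := finiteV F V
  exact Finite.of_injective (fun W => (W : Set V)) (fun a b h => SetLike.coe_injective h)

variable {V : Type} [AddCommGroup V] [Module F V] [FiniteDimensional F V]

def fmV (K : Projectivization F V → ℕ) (W : Submodule F V) : ℕ :=
  ∑ᶠ P ∈ {P : Projectivization F V | P.submodule ≤ W}, K P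

lemma fmV_eq [Fintype (Projectivization F V)] (K : Projectivization F V → ℕ)
    (W : Submodule F V) :
    fmV K W = ∑ P ∈ univ.filter (fun P : Projectivization F V => P.submodule ≤ W), K P := by
  rw [fmV, ← finsum_mem_coe_finset]
  congr 1
  ext P; simp

lemma point_le_fmV (K : Projectivization F V → ℕ) {P : Projectivization F V}
    {W : Submodule F V} (h : P.submodule ≤ W) : K P ≤ fmV K W := by
  haveI : Fintype (Projectivization F V) := @Fintype.ofFinite _ (finitePGV F V)
  rw [fmV_eq]
  exact Finset.single_le_sum (fun i _ => Nat.zero_le _) (by simp [h])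

lemma fmV_mono (K : Projectivization F V → ℕ) {W W' : Submodule F V} (h : W ≤ W') :
    fmV K W ≤ fmV K W' := by
  haveI : Fintype (Projectivization F V) := @Fintype.ofFinite _ (finitePGV F V)
  rw [fmV_eq, fmV_eq]
  apply Finset.sum_le_sum_of_subset
  intro x hx
  simp only [mem_filter, mem_univ, true_and] at hx ⊢
  exact hx.trans h

-- submodule helpers
lemma inf_line_eq_bot {S : Submodule F V} {x : V} (hx : x ∉ S) : S ⊓ (F ∙ x) = ⊥ := by
  rw [eq_bot_iff]
  intro y hy
  obtain ⟨hyS, hyx⟩ := Submodule.mem_inf.mp hy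
  obtain ⟨c, rfl⟩ := Submodule.mem_span_singleton.mp hyx
  rcases eq_or_ne c 0 with rfl | hc
  · simp
  · exact absurd (by simpa [smul_smul, inv_mul_cancel₀ hc] using S.smul_mem c⁻¹ hyS) hx

lemma finrank_sup_line {S : Submodule F V} {x : V} (hx : x ∉ S) :
    finrank F ↥(S ⊔ (F ∙ x)) = finrank F S + 1 := by
  have hx0 : x ≠ 0 := fun h => hx (h ▸ S.zero_mem)
  have := Submodule.finrank_sup_add_finrank_inf_eq S (F ∙ x)
  rw [inf_line_eq_bot hx, finrank_span_singleton hx0] at this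
  simpa using this

lemma exists_hyperplane (h : 1 ≤ finrank F V) :
    ∃ H : Submodule F V, finrank F H = finrank F V - 1 := by
  set b := Module.finBasis F V
  set f : V →ₗ[F] F := b.coord ⟨0, h⟩
  refine ⟨LinearMap.ker f, ?_⟩
  have hsurj : Function.Surjective f := by
    intro c
    exact ⟨c • b ⟨0, h⟩, by simp [f]⟩
  have h1 := LinearMap.finrank_range_add_finrank_ker f
  rw [LinearMap.range_eq_top.mpr hsurj, finrank_top, Module.finrank_self] at h1
  omega

lemma finrank_comap_mkQ_s4 (L : Submodule F V) (W' : Submodule F (V ⧸ L)) :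
    finrank F ↥(W'.comap L.mkQ) = finrank F W' + finrank F L := by
  set C := W'.comap L.mkQ
  set f : C →ₗ[F] V ⧸ L := L.mkQ.comp C.subtype
  have h1 := LinearMap.finrank_range_add_finrank_ker f
  have hr : LinearMap.range f = W' := by
    rw [LinearMap.range_comp, Submodule.range_subtype]
    exact Submodule.map_comap_eq_of_surjective (Submodule.mkQ_surjective L) W'
  have hk : LinearMap.ker f = Submodule.comap C.subtype L := by
    rw [LinearMap.ker_comp, Submodule.ker_mkQ]
  have hL : L ≤ C := by
    intro x hx
    simp [C, Submodule.mem_comap, Submodule.mkQ_apply, (Submodule.Quotient.mk_eq_zero L).mpr hx]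
  have h2 : finrank F ↥(Submodule.comap C.subtype L) = finrank F L :=
    (Submodule.comapSubtypeEquivOfLe hL).finrank_eq
  rw [hr, hk, h2] at h1
  have h3 : finrank F C = finrank F ↥(W'.comap L.mkQ) := rfl
  omega

end fmV

section codim2
open Module Submodule Finset

variable {F : Type} [Field F] [Fintype F]
variable {V : Type} [AddCommGroup V] [Module F V] [FiniteDimensional F V]

lemma card_hyp_through [Fintype (Submodule F V)] (S : Submodule F V)
    (hS : finrank F S + 2 = finrank F V) :
    (univ.filter (fun H : Submodule F V =>
      finrank F H = finrank F V - 1 ∧ S ≤ H)).card ≤ Fintype.card F + 1 := by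
  set m := finrank F V with hm
  have hm2 : 2 ≤ m := by omega
  -- pick u ∉ S
  have hSne : S ≠ ⊤ := by
    intro h
    rw [h, finrank_top] at hS; omega
  have hSlt : S < ⊤ := lt_top_iff_ne_top.mpr hSne
  obtain ⟨u, -, huS⟩ := SetLike.exists_of_lt hSlt
  have hrk1 := finrank_sup_line huS
  have hS1ne : S ⊔ (F ∙ u) ≠ ⊤ := by
    intro h
    rw [h, finrank_top] at hrk1; omega
  have hS1lt : S ⊔ (F ∙ u) < ⊤ := lt_top_iff_ne_top.mpr hS1ne
  obtain ⟨v, -, hvS1⟩ := SetLike.exists_of_lt hS1lt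
  have hvS : v ∉ S := fun h => hvS1 (Submodule.mem_sup_left h)
  have huS1 : u ∈ S ⊔ (F ∙ u) := Submodule.mem_sup_right (Submodule.mem_span_singleton_self u)
  -- existence of slope
  have h_exists : ∀ H : Submodule F V, finrank F H = m - 1 → v ∉ H →
      ∃ c : F, u + c • v ∈ H := by
    intro H hHr hvH
    have hq1 : finrank F (V ⧸ H) = 1 := by
      have := Submodule.finrank_quotient_add_finrank H; omega
    have hv0 : H.mkQ v ≠ 0 := by
      simpa [Submodule.mkQ_apply, Submodule.Quotient.mk_eq_zero] using hvH
    have hsp : (F ∙ (H.mkQ v)) = ⊤ := by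
      apply Submodule.eq_top_of_finrank_eq
      rw [finrank_span_singleton hv0, hq1]
    have hu : H.mkQ u ∈ (F ∙ (H.mkQ v)) := hsp ▸ Submodule.mem_top
    obtain ⟨a, ha⟩ := Submodule.mem_span_singleton.mp hu
    refine ⟨-a, ?_⟩
    have h0 : H.mkQ (u + (-a) • v) = 0 := by
      rw [map_add, map_smul, ← ha]
      simp [neg_smul]
    exact (Submodule.Quotient.mk_eq_zero H).mp (by simpa [Submodule.mkQ_apply] using h0)
  -- u + c•v is never in S
  have h_w_notin_S : ∀ c : F, u + c • v ∉ S := by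
    intro c hc
    rcases eq_or_ne c 0 with rfl | hc0
    · simp at hc; exact huS hc
    · have hcS1 : u + c • v ∈ S ⊔ (F ∙ u) := Submodule.mem_sup_left hc
      have hcv : c • v ∈ S ⊔ (F ∙ u) := by
        have := Submodule.sub_mem _ hcS1 huS1
        simpa using this
      have : v ∈ S ⊔ (F ∙ u) := by
        have := Submodule.smul_mem _ c⁻¹ hcv
        rwa [smul_smul, inv_mul_cancel₀ hc0, one_smul] at this
      exact hvS1 this
  -- a hyperplane through S is determined by one extra point
  have h_det : ∀ H : Submodule F V, finrank F H = m - 1 → S ≤ H →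
      ∀ w : V, w ∈ H → w ∉ S → H = S ⊔ (F ∙ w) := by
    intro H hHr hSH w hwH hwS
    have hle : S ⊔ (F ∙ w) ≤ H :=
      sup_le hSH ((Submodule.span_singleton_le_iff_mem _ _).mpr hwH)
    have hrk := finrank_sup_line hwS
    exact (Submodule.eq_of_le_of_finrank_le hle (by omega)).symm
  -- the injection
  classical
  set φ : Submodule F V → Option F := fun H =>
    if v ∈ H then none
    else if hc : ∃ c : F, u + c • v ∈ H then some hc.choose else none
    with hφ
  have hinj : Set.InjOn φ (univ.filter (fun H : Submodule F V =>
      finrank F H = m - 1 ∧ S ≤ H)) := by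
    intro H hH H' hH' heq
    simp only [Finset.coe_filter, Set.mem_setOf_eq, Finset.mem_univ, true_and] at hH hH'
    by_cases hv : v ∈ H <;> by_cases hv' : v ∈ H'
    · rw [h_det H hH.1 hH.2 v hv hvS, h_det H' hH'.1 hH'.2 v hv' hvS]
    · have he' := h_exists H' hH'.1 hv'
      simp [hφ, hv, hv', he'] at heq
    · have he := h_exists H hH.1 hv
      simp [hφ, hv, hv', he] at heq
    · have he := h_exists H hH.1 hv
      have he' := h_exists H' hH'.1 hv'
      simp only [hφ, if_neg hv, if_neg hv', dif_pos he, dif_pos he',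
        Option.some.injEq] at heq
      have hc1 : u + he.choose • v ∈ H := he.choose_spec
      have hc2 : u + he.choose • v ∈ H' := by
        rw [heq]; exact he'.choose_spec
      rw [h_det H hH.1 hH.2 _ hc1 (h_w_notin_S _),
        h_det H' hH'.1 hH'.2 _ hc2 (h_w_notin_S _), heq]
  have := Finset.card_le_card_of_injOn φ
    (fun a _ => Finset.mem_univ (φ a)) hinj
  simpa [Fintype.card_option] using this

end codim2

section codim2b
open Module Submodule Finset

variable {F : Type} [Field F] [Fintype F]
variable {V : Type} [AddCommGroup V] [Module F V] [FiniteDimensional F V]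

lemma pt_submodule_notle {x : Projectivization F V} {S : Submodule F V}
    (hx : ¬ x.submodule ≤ S) : x.rep ∉ S := by
  intro h
  exact hx (x.submodule_eq ▸ (Submodule.span_singleton_le_iff_mem _ _).mpr h)

lemma codim2_bound (K : Projectivization F V → ℕ) (S : Submodule F V)
    (hS : finrank F S + 2 = finrank F V) (M : ℕ)
    (hM : ∀ H : Submodule F V, finrank F H = finrank F V - 1 → fmV K H ≤ M) :
    fmV K ⊤ ≤ fmV K S + (Fintype.card F + 1) * (M - fmV K S) := by
  haveI : Fintype (Projectivization F V) := @Fintype.ofFinite _ (finitePGV F V)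
  haveI : Fintype (Submodule F V) := @Fintype.ofFinite _ (finiteSub F V)
  set A : Submodule F V → Finset (Projectivization F V) :=
    fun W => univ.filter (fun x => x.submodule ≤ W) with hA
  have hfm : ∀ W : Submodule F V, fmV K W = ∑ x ∈ A W, K x := fun W => fmV_eq K W
  set m := finrank F V with hm
  have hHx : ∀ x : Projectivization F V, ¬ x.submodule ≤ S →
      finrank F ↥(S ⊔ x.submodule) = m - 1 := by
    intro x hx
    rw [x.submodule_eq, finrank_sup_line (pt_submodule_notle hx)]
    omega
  set T : Finset (Submodule F V) :=
    univ.filter (fun H => finrank F H = m - 1 ∧ S ≤ H) with hT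
  have hSM : fmV K S ≤ M := by
    have hSne : S ≠ ⊤ := by intro h; rw [h, finrank_top] at hS; omega
    have hSlt : S < ⊤ := lt_top_iff_ne_top.mpr hSne
    obtain ⟨u, -, huS⟩ := SetLike.exists_of_lt hSlt
    have h1 := finrank_sup_line huS
    have h2 : finrank F ↥(S ⊔ (F ∙ u)) = m - 1 := by omega
    exact le_trans (fmV_mono K le_sup_left) (hM _ h2)
  have hcover : A ⊤ \ A S ⊆ T.biUnion (fun H => A H \ A S) := by
    intro x hx
    simp only [Finset.mem_sdiff, hA, Finset.mem_filter, Finset.mem_univ, true_and] at hx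
    obtain ⟨-, hxS⟩ := hx
    refine Finset.mem_biUnion.mpr ⟨S ⊔ x.submodule, ?_, ?_⟩
    · simp only [hT, Finset.mem_filter, Finset.mem_univ, true_and]
      exact ⟨hHx x hxS, le_sup_left⟩
    · simp only [Finset.mem_sdiff, hA, Finset.mem_filter, Finset.mem_univ, true_and]
      exact ⟨le_sup_right, hxS⟩
  have hdisj : ∀ H ∈ (T : Set (Submodule F V)), ∀ H' ∈ (T : Set (Submodule F V)), H ≠ H' →
      Disjoint (A H \ A S) (A H' \ A S) := by
    intro H hH H' hH' hne
    simp only [hT, Finset.coe_filter, Set.mem_setOf_eq, Finset.mem_univ, true_and] at hH hH'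
    rw [Finset.disjoint_left]
    intro x hx hx'
    simp only [Finset.mem_sdiff, hA, Finset.mem_filter, Finset.mem_univ, true_and] at hx hx'
    have hlt : H < H ⊔ H' := by
      rcases lt_or_eq_of_le (le_sup_left : H ≤ H ⊔ H') with h | h
      · exact h
      · exfalso
        have hH'le : H' ≤ H := h ▸ le_sup_right
        exact hne ((Submodule.eq_of_le_of_finrank_le hH'le (by omega)).symm)
    have hsupr : finrank F ↥(H ⊔ H') = m := by
      have h1 : finrank F ↥(H ⊔ H') ≤ m := by
        simpa [hm] using Submodule.finrank_le (H ⊔ H')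
      have h2 := Submodule.finrank_lt_finrank_of_lt hlt
      omega
    have h3 := Submodule.finrank_sup_add_finrank_inf_eq H H'
    rw [hsupr, hH.1, hH'.1] at h3
    have hSinf : S ≤ H ⊓ H' := le_inf hH.2 hH'.2
    have hSeq : S = H ⊓ H' := Submodule.eq_of_le_of_finrank_le hSinf (by omega)
    exact hx.2 (hSeq ▸ le_inf hx.1 hx'.1)
  have hsub : A S ⊆ A ⊤ := fun x hx => by simp [hA]
  have hTcard : T.card ≤ Fintype.card F + 1 := card_hyp_through S hS
  have hsplit : fmV K ⊤ = ∑ x ∈ A ⊤ \ A S, K x + fmV K S := by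
    rw [hfm ⊤, hfm S, Finset.sum_sdiff hsub]
  have hterm : ∀ H ∈ T, ∑ x ∈ A H \ A S, K x ≤ M - fmV K S := by
    intro H hH
    simp only [hT, Finset.mem_filter, Finset.mem_univ, true_and] at hH
    have hASH : A S ⊆ A H := by
      intro x hx
      simp only [hA, Finset.mem_filter, Finset.mem_univ, true_and] at hx ⊢
      exact hx.trans hH.2
    have h1 : ∑ x ∈ A H \ A S, K x + fmV K S = fmV K H := by
      rw [hfm H, hfm S, Finset.sum_sdiff hASH]
    have h2 : fmV K H ≤ M := hM H hH.1
    omega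
  have hmain : ∑ x ∈ A ⊤ \ A S, K x ≤ T.card * (M - fmV K S) := by
    calc ∑ x ∈ A ⊤ \ A S, K x ≤ ∑ x ∈ T.biUnion (fun H => A H \ A S), K x :=
          Finset.sum_le_sum_of_subset hcover
      _ = ∑ H ∈ T, ∑ x ∈ A H \ A S, K x := Finset.sum_biUnion hdisj
      _ ≤ ∑ H ∈ T, (M - fmV K S) := Finset.sum_le_sum hterm
      _ = T.card * (M - fmV K S) := by rw [Finset.sum_const, smul_eq_mul]
  have : T.card * (M - fmV K S) ≤ (Fintype.card F + 1) * (M - fmV K S) :=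
    Nat.mul_le_mul_right _ hTcard
  omega

end codim2b

section restrict
open Module Submodule Finset

variable {F : Type} [Field F] [Fintype F]
variable {V : Type} [AddCommGroup V] [Module F V] [FiniteDimensional F V]

lemma mk_congr {v w : V} (h : v = w) (hv : v ≠ 0) :
    Projectivization.mk F v hv = Projectivization.mk F w (h ▸ hv) := by subst h; rfl

lemma submodule_map_eq {W' : Type} [AddCommGroup W'] [Module F W']
    (f : V →ₗ[F] W') (hf : Function.Injective f) (x : Projectivization F V) :
    (x.map f hf).submodule = x.submodule.map f := by
  induction x using Projectivization.ind with
  | h v hv =>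
    rw [Projectivization.map_mk, Projectivization.submodule_mk, Projectivization.submodule_mk,
      Submodule.map_span, Set.image_singleton]

lemma fmV_restrict (H : Submodule F V) (K : Projectivization F V → ℕ) (W : Submodule F H) :
    fmV (fun Q : Projectivization F H => K (Q.map H.subtype (Submodule.injective_subtype H))) W
      = fmV K (W.map H.subtype) := by
  haveI : Fintype (Projectivization F V) := @Fintype.ofFinite _ (finitePGV F V)
  haveI : Fintype (Projectivization F ↥H) := @Fintype.ofFinite _ (finitePGV F ↥H)
  rw [fmV_eq, fmV_eq]
  apply Finset.sum_bij (i := fun Q _ => Q.map H.subtype (Submodule.injective_subtype H))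
  · intro Q hQ
    simp only [Finset.mem_filter, Finset.mem_univ, true_and] at hQ ⊢
    rw [submodule_map_eq]
    exact Submodule.map_mono hQ
  · intro a _ b _ hab
    exact Projectivization.map_injective H.subtype (Submodule.injective_subtype H) hab
  · intro b hb
    simp only [Finset.mem_filter, Finset.mem_univ, true_and] at hb
    have hrep : b.rep ∈ W.map H.subtype := by
      have : b.rep ∈ b.submodule := b.submodule_eq ▸ Submodule.mem_span_singleton_self _
      exact hb this
    obtain ⟨y, hyW, hy⟩ := Submodule.mem_map.mp hrep
    have hy0 : y ≠ 0 := by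
      intro h
      apply b.rep_nonzero
      rw [← hy, h, map_zero]
    refine ⟨Projectivization.mk F y hy0, ?_, ?_⟩
    · simp only [Finset.mem_filter, Finset.mem_univ, true_and,
        Projectivization.submodule_mk]
      exact (Submodule.span_singleton_le_iff_mem _ _).mpr hyW
    · calc Projectivization.map H.subtype (Submodule.injective_subtype H)
            (Projectivization.mk F y hy0)
          = Projectivization.mk F (H.subtype y) _ := Projectivization.map_mk _ _ _ _
        _ = Projectivization.mk F b.rep b.rep_nonzero := mk_congr hy _
        _ = b := Projectivization.mk_rep b
  · intro a _
    rfl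

end restrict

section griesmerlemma
open Module Submodule

variable {F : Type} [Field F] [Fintype F]

theorem griesmerV (k : ℕ) :
    ∀ (V : Type) [AddCommGroup V] [Module F V] [FiniteDimensional F V],
      finrank F V = k → ∀ (K : Projectivization F V → ℕ) (d : ℕ),
      (∀ H : Submodule F V, finrank F H = k - 1 → fmV K H + d ≤ fmV K ⊤) →
      griesmer (Fintype.card F) k d ≤ fmV K ⊤ := by
  induction k with
  | zero => intro V _ _ _ _ K d _; simp [griesmer]
  | succ k ih =>
    intro V _ _ _ hV K d hHyp
    have hq : 0 < Fintype.card F := Fintype.card_pos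
    haveI := finiteSub F V
    have hex : ({H : Submodule F V | finrank F H = k}).Nonempty := by
      have := exists_hyperplane (F := F) (V := V) (by omega)
      obtain ⟨H, hH⟩ := this
      exact ⟨H, by simp only [Set.mem_setOf_eq]; omega⟩
    have hfin : ({H : Submodule F V | finrank F H = k}).Finite := Set.toFinite _
    obtain ⟨H₀, hH₀mem, hH₀max⟩ := Set.Finite.exists_maximalFor (fmV K) _ hfin hex
    simp only [Set.mem_setOf_eq] at hH₀mem
    set M := fmV K H₀ with hM
    have hmax : ∀ H : Submodule F V, finrank F H = k → fmV K H ≤ M := by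
      intro H hH
      rcases le_total (fmV K H) M with h | h
      · exact h
      · exact hH₀max hH h
    have hMn : M + d ≤ fmV K ⊤ := hHyp H₀ (by simpa using hH₀mem)
    rcases Nat.eq_zero_or_pos k with rfl | hk
    · rw [griesmer_succ' _ 0 d hq]
      simp only [griesmer, Finset.range_zero, Finset.sum_empty, add_zero]
      omega
    · set q := Fintype.card F with hqdef
      set K' : Projectivization F ↥H₀ → ℕ :=
        fun Q => K (Q.map H₀.subtype (Submodule.injective_subtype H₀)) with hK'
      have htop : fmV K' ⊤ = M := by
        rw [hK', fmV_restrict H₀ K ⊤, Submodule.map_subtype_top H₀]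
      have hH₀rank : finrank F ↥H₀ = k := hH₀mem
      have hhyp' : ∀ S' : Submodule F ↥H₀, finrank F S' = k - 1 →
          fmV K' S' + ⌈(d:ℚ)/q⌉₊ ≤ fmV K' ⊤ := by
        intro S' hS'
        rw [htop, hK', fmV_restrict H₀ K S']
        set S := S'.map H₀.subtype with hSdef
        have hSrank : finrank F ↥S = k - 1 := by
          rw [hSdef, Submodule.finrank_map_subtype_eq]; exact hS'
        have hS2 : finrank F ↥S + 2 = finrank F V := by omega
        have hcb := codim2_bound K S hS2 M
          (by intro H hH; exact hmax H (by omega))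
        have hSleM : fmV K S ≤ M :=
          fmV_mono K (Submodule.map_subtype_le H₀ S')
        have hqt : (Fintype.card F + 1) * (M - fmV K S)
            = Fintype.card F * (M - fmV K S) + (M - fmV K S) := by ring
        have hd : d ≤ q * (M - fmV K S) := by rw [hqdef]; omega
        have hceil : ⌈(d:ℚ)/q⌉₊ ≤ M - fmV K S := by
          rw [ceil_nat_div_le_iff d q _ hq, mul_comm]
          exact hd
        omega
      have hih := ih ↥H₀ hH₀rank K' (⌈(d:ℚ)/q⌉₊) hhyp'
      rw [htop] at hih
      rw [griesmer_succ' q k d hq]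
      omega

end griesmerlemma

section quot
open Module Submodule Finset

variable {F : Type} [Field F] [Fintype F]
variable {V : Type} [AddCommGroup V] [Module F V] [FiniteDimensional F V]

lemma fmV_proj (P : Projectivization F V) (K : Projectivization F V → ℕ)
    (hdim : 2 ≤ finrank F V) :
    ∃ Kbar : Projectivization F (V ⧸ P.submodule) → ℕ,
      ∀ W' : Submodule F (V ⧸ P.submodule),
        fmV Kbar W' + K P = fmV K (W'.comap P.submodule.mkQ) := by
  haveI : Fintype (Projectivization F V) := @Fintype.ofFinite _ (finitePGV F V)
  haveI : Fintype (Projectivization F (V ⧸ P.submodule)) :=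
    @Fintype.ofFinite _ (finitePGV F _)
  set L := P.submodule with hL
  have hq1 : finrank F (V ⧸ L) = finrank F V - 1 := by
    have h1 := Submodule.finrank_quotient_add_finrank L
    have h2 : finrank F ↥L = 1 := P.finrank_submodule
    omega
  have hnt : ∃ z : V ⧸ L, z ≠ 0 := by
    by_contra h
    push_neg at h
    have hbt : (⊤ : Submodule F (V ⧸ L)) = ⊥ := by ext x; simp [h x]
    have : finrank F (V ⧸ L) = 0 := by
      rw [← finrank_top, hbt, finrank_bot]
    omega
  obtain ⟨z, hz⟩ := hnt
  have hPonly : ∀ x : Projectivization F V, x.submodule ≤ L → x = P := by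
    intro x h
    apply Projectivization.submodule_injective
    exact Submodule.eq_of_le_of_finrank_le h
      (by rw [x.finrank_submodule, P.finrank_submodule])
  have hrepL : ∀ x : Projectivization F V, x ≠ P → L.mkQ x.rep ≠ 0 := by
    intro x hx h0
    have hmem : x.rep ∈ L := (Submodule.Quotient.mk_eq_zero L).mp (by simpa using h0)
    exact hx (hPonly x (x.submodule_eq ▸
      (Submodule.span_singleton_le_iff_mem _ _).mpr hmem))
  set g : Projectivization F V → Projectivization F (V ⧸ L) :=
    fun x => if hx : x = P then Projectivization.mk F z hz
      else Projectivization.mk F (L.mkQ x.rep) (hrepL x hx) with hg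
  have hgsub : ∀ x : Projectivization F V, x ≠ P →
      (g x).submodule = x.submodule.map L.mkQ := by
    intro x hx
    rw [hg]; simp only [dif_neg hx]
    rw [Projectivization.submodule_mk, x.submodule_eq, Submodule.map_span,
      Set.image_singleton]
  refine ⟨fun y => ∑ x ∈ univ.filter (fun x => x ≠ P ∧ g x = y), K x, ?_⟩
  intro W'
  set C := W'.comap L.mkQ with hC
  have hLC : L ≤ C := by
    intro x hx
    have h0 : L.mkQ x = 0 := by simpa using (Submodule.Quotient.mk_eq_zero L).mpr hx
    simp [hC, Submodule.mem_comap, h0]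
  have hiff : ∀ x : Projectivization F V, x ≠ P →
      ((g x).submodule ≤ W' ↔ x.submodule ≤ C) := by
    intro x hx
    rw [hgsub x hx, hC, Submodule.map_le_iff_le_comap]
  rw [fmV_eq, fmV_eq]
  set s := univ.filter (fun x : Projectivization F V => x.submodule ≤ C ∧ x ≠ P) with hs
  set t := univ.filter (fun y : Projectivization F (V ⧸ L) => y.submodule ≤ W') with ht
  have hPC : P.submodule ≤ C := hLC
  have hsplit : (univ.filter (fun x : Projectivization F V => x.submodule ≤ C))
      = insert P s := by
    ext x
    simp only [hs, mem_filter, mem_univ, true_and, mem_insert]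
    constructor
    · intro h
      by_cases hx : x = P
      · left; exact hx
      · right; exact ⟨h, hx⟩
    · rintro (rfl | ⟨h, -⟩)
      · exact hPC
      · exact h
  rw [hsplit, Finset.sum_insert (by simp [hs])]
  have h1 : ∀ y ∈ t, univ.filter (fun x => x ≠ P ∧ g x = y)
      = s.filter (fun x => g x = y) := by
    intro y hy
    simp only [ht, mem_filter, mem_univ, true_and] at hy
    ext x
    simp only [hs, mem_filter, mem_univ, true_and]
    constructor
    · rintro ⟨hxP, rfl⟩
      exact ⟨⟨(hiff x hxP).mp hy, hxP⟩, rfl⟩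
    · rintro ⟨⟨-, hxP⟩, hgx⟩
      exact ⟨hxP, hgx⟩
  have h2 : ∑ y ∈ t, (∑ x ∈ univ.filter (fun x => x ≠ P ∧ g x = y), K x)
      = ∑ x ∈ s, K x := by
    rw [Finset.sum_congr rfl (fun y hy => by rw [h1 y hy])]
    apply Finset.sum_fiberwise_of_maps_to
    intro x hx
    simp only [hs, mem_filter, mem_univ, true_and] at hx
    simp only [ht, mem_filter, mem_univ, true_and]
    exact (hiff x hx.2).mpr hx.1
  rw [h2, add_comm]

end quot


/-- a Griesmer `(n, n-d)`-arc in `PG(k-1,q)` has maximal point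
multiplicity at most `⌈d/q^(k-1)⌉`. -/
theorem stmt4 {F : Type} [Field F] [Fintype F] {k : ℕ} (hk : 1 ≤ k)
    (K : PGPt F k → ℕ) (n d : ℕ) (hArc : IsArc K n (n - d))
    (hn : n = griesmer (Fintype.card F) k d) (P : PGPt F k) :
    K P ≤ ⌈(d : ℚ) / (Fintype.card F : ℚ) ^ (k - 1)⌉₊ := by
  classical
  obtain ⟨htop, hbound, -⟩ := hArc
  have hq : 0 < Fintype.card F := Fintype.card_pos
  have hd_le_n : d ≤ n := hn ▸ d_le_griesmer _ k d hq hk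
  have hKP : K P ≤ n := by
    rw [← htop]
    exact point_le_fmV K le_top
  rcases eq_or_lt_of_le hk with hk1 | hk2
  · -- k = 1
    subst hk1
    have hgr1 : griesmer (Fintype.card F) 1 d = ⌈(d:ℚ)/(Fintype.card F:ℚ)^0⌉₊ :=
      Finset.sum_range_one _
    rw [hn, hgr1] at hKP
    exact hKP
  · -- k ≥ 2
    obtain ⟨j, rfl⟩ : ∃ j, k = j + 2 := ⟨k - 2, by omega⟩
    have hrankV : Module.finrank F (Fin (j+2) → F) = j + 2 := Module.finrank_fin_fun F
    have hfr1 : Module.finrank F ↥P.submodule = 1 := P.finrank_submodule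
    have hdim : 2 ≤ Module.finrank F (Fin (j+2) → F) := by omega
    obtain ⟨Kbar, hKbar⟩ := fmV_proj P K hdim
    have hqrank : Module.finrank F ((Fin (j+2) → F) ⧸ P.submodule) = j + 1 := by
      have h1 := Submodule.finrank_quotient_add_finrank P.submodule
      omega
    have e2 := hKbar ⊤
    rw [Submodule.comap_top] at e2
    have htop' : fmV K ⊤ = n := htop
    have hhyp : ∀ H' : Submodule F ((Fin (j+2) → F) ⧸ P.submodule),
        Module.finrank F H' = (j+1) - 1 → fmV Kbar H' + d ≤ fmV Kbar ⊤ := by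
      intro H' hH'
      have hcom := finrank_comap_mkQ_s4 P.submodule H'
      have h2 : Module.finrank F ↥(H'.comap P.submodule.mkQ) = (j+2) - 1 := by
        rw [hcom, hH', hfr1]; omega
      have hb : fm K (H'.comap P.submodule.mkQ) ≤ n - d := hbound _ h2
      have e1 := hKbar H'
      have hb' : fmV K (H'.comap P.submodule.mkQ) ≤ n - d := hb
      omega
    have hg := griesmerV (j+1) ((Fin (j+2) → F) ⧸ P.submodule) hqrank Kbar d hhyp
    have hgr : griesmer (Fintype.card F) (j+2) d
        = griesmer (Fintype.card F) (j+1) d + ⌈(d:ℚ)/(Fintype.card F:ℚ)^(j+1)⌉₊ :=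
      griesmer_succ _ (j+1) d
    show K P ≤ ⌈(d : ℚ) / (Fintype.card F : ℚ) ^ (j+1)⌉₊
    omega
end
end

section
/- Let F be a (70,22)-minihyper in PG(4,3), and suppose some hyperplane (solid) S satisfies F(S) ≥ 49. Then every point of S has multiplicity at least 1 under F. -/
open scoped BigOperators

noncomputable section

namespace Stmt7Aux

open Module Submodule Finset

abbrev F3 := ZMod 3
abbrev V3 := Fin 5 → ZMod 3

def Pfirst (u : V3) : Prop := ∃ i, u i = 1 ∧ ∀ j < i, u j = 0

instance : DecidablePred Pfirst := fun u => by unfold Pfirst; infer_instance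

set_option maxRecDepth 100000 in
set_option maxHeartbeats 1000000 in
theorem D1 : ∀ u : V3, u = 0 ∨ (Pfirst u ↔ ¬ Pfirst ((2:F3) • u)) := by decide

lemma two_smul_two_smul (u : V3) : (2:F3) • (2:F3) • u = u := by
  rw [smul_smul]; norm_num
  rw [show ((4:F3)) = 1 by decide, one_smul]

/-- the normalized vectors: exactly one per projective point -/
def N : Finset V3 := Finset.univ.filter (fun u => u ≠ 0 ∧ Pfirst u)

lemma mem_N {u : V3} : u ∈ N ↔ u ≠ 0 ∧ Pfirst u := by simp [N]

def twoU : F3ˣ := ⟨2, 2, by decide, by decide⟩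

/-- the dot-product bilinear form -/
def B : LinearMap.BilinForm F3 V3 :=
  LinearMap.mk₂ F3 (fun u v => ∑ i, u i * v i)
    (fun a b c => by simp [add_mul, Finset.sum_add_distrib])
    (fun a b c => by simp [Finset.mul_sum, mul_assoc])
    (fun a b c => by simp [mul_add, Finset.sum_add_distrib])
    (fun a b c => by simp [Finset.mul_sum, mul_comm, mul_left_comm])

lemma B_apply (u v : V3) : B u v = ∑ i, u i * v i := rfl

lemma B_comm (u v : V3) : B u v = B v u := by
  simp only [B_apply, mul_comm]

lemma B_refl : B.IsRefl := fun u v h => by rwa [B_comm]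

lemma B_nondeg : B.Nondegenerate := by
  refine (LinearMap.IsRefl.nondegenerate_iff_separatingLeft B_refl).2 ?_
  intro u hu
  funext i
  have := hu (Pi.single i 1)
  simpa [B_apply, Pi.single_apply, Finset.sum_ite_eq', mul_ite] using this

instance : Finite (PGPt F3 5) := Quotient.finite _

def mkP (u : V3) : PGPt F3 5 :=
  if h : u = 0 then Projectivization.mk F3 (fun _ => 1) (by
    intro he; have h1 := congrFun he 0; simp at h1
    ) else Projectivization.mk F3 u h

lemma mkP_eq {u : V3} (h : u ≠ 0) : mkP u = Projectivization.mk F3 u h := dif_neg h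

lemma submodule_mkP {u : V3} (h : u ≠ 0) : (mkP u).submodule = span F3 {u} := by
  rw [mkP_eq h, Projectivization.submodule_mk]

lemma mkP_smul_two {u : V3} (h : u ≠ 0) : mkP ((2:F3) • u) = mkP u := by
  have h2 : (2:F3) • u ≠ 0 := by
    intro he; apply h
    have := congrArg (fun w => (2:F3) • w) he
    simpa [two_smul_two_smul] using this
  rw [mkP_eq h2, mkP_eq h]
  rw [Projectivization.mk_eq_mk_iff]
  exact ⟨twoU, rfl⟩

lemma norm_unique {u v : V3} (hu : u ∈ N) (hv : v ∈ N) (h : mkP u = mkP v) : u = v := by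
  rw [mem_N] at hu hv
  rw [mkP_eq hu.1, mkP_eq hv.1, Projectivization.mk_eq_mk_iff] at h
  obtain ⟨a, rfl⟩ := h
  have ha : ∀ b : F3ˣ, (b : F3) = 1 ∨ (b : F3) = 2 := by decide
  rcases ha a with ha | ha
  · rw [Units.smul_def, ha, one_smul]
  · exfalso
    rw [Units.smul_def, ha] at hu
    rcases D1 v with h0 | hiff
    · exact hv.1 h0
    · exact (hiff.1 hv.2) hu.2

lemma norm_exists {u : V3} (h : u ≠ 0) : ∃ w ∈ N, mkP w = mkP u ∧ w ∈ span F3 {u} := by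
  rcases D1 u with h0 | hiff
  · exact absurd h0 h
  by_cases hp : Pfirst u
  · exact ⟨u, mem_N.2 ⟨h, hp⟩, rfl, mem_span_singleton_self u⟩
  · have h2 : Pfirst ((2:F3) • u) := by
      by_contra hq; exact hp (hiff.2 hq)
    have h2n : (2:F3) • u ≠ 0 := by
      intro he; apply h
      have := congrArg (fun w => (2:F3) • w) he
      simpa [two_smul_two_smul] using this
    exact ⟨(2:F3) • u, mem_N.2 ⟨h2n, h2⟩, mkP_smul_two h,
      smul_mem _ _ (mem_span_singleton_self u)⟩

open scoped Classical in
/-- fundamental: fm as a concrete finset sum over normalized vectors -/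
lemma fm_eq (K : PGPt F3 5 → ℕ) (W : Submodule F3 V3) :
    fm K W = ∑ u ∈ N.filter (fun u => u ∈ W), K (mkP u) := by
  classical
  unfold fm
  rw [finsum_mem_eq_finite_toFinset_sum _ (Set.toFinite _)]
  refine (Finset.sum_bij (fun u _ => mkP u) ?_ ?_ ?_ ?_).symm
  · intro u hu
    simp only [Set.Finite.mem_toFinset, Set.mem_setOf_eq]
    rw [Finset.mem_filter] at hu
    have hun : u ≠ 0 := (mem_N.1 hu.1).1
    rw [submodule_mkP hun, span_singleton_le_iff_mem]
    exact hu.2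
  · intro u hu v hv h
    exact norm_unique (Finset.mem_filter.1 hu).1 (Finset.mem_filter.1 hv).1 h
  · intro P hP
    simp only [Set.Finite.mem_toFinset, Set.mem_setOf_eq] at hP
    obtain ⟨w, hwN, hwmk, hwsp⟩ := norm_exists P.rep_nonzero
    refine ⟨w, ?_, ?_⟩
    · rw [Finset.mem_filter]
      refine ⟨hwN, ?_⟩
      apply hP
      rw [Projectivization.submodule_eq]
      exact hwsp
    · show mkP w = P
      rw [hwmk, mkP_eq P.rep_nonzero, Projectivization.mk_rep]
  · intro u hu; rfl

open scoped Classical in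
/-- counting normalized vectors in a subspace -/
lemma card2 (W : Submodule F3 V3) :
    2 * (N.filter (fun u => u ∈ W)).card + 1 = 3 ^ (Module.finrank F3 W) := by
  classical
  -- the nonzero vectors of W
  set U : Finset V3 := Finset.univ.filter (fun u => u ∈ W ∧ u ≠ 0) with hU
  set A : Finset V3 := N.filter (fun u => u ∈ W) with hA
  have hcardW : U.card + 1 = 3 ^ (Module.finrank F3 W) := by
    have h1 : (Finset.univ.filter (fun u : V3 => u ∈ W)).card = Fintype.card W := by
      rw [Fintype.card_subtype]
    have h2 : Finset.univ.filter (fun u : V3 => u ∈ W) = insert 0 U := by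
      ext u
      simp only [hU, Finset.mem_insert, Finset.mem_filter, Finset.mem_univ, true_and]
      by_cases h : u = 0
      · simp [h, W.zero_mem]
      · simp [h]
    have h3 : (0:V3) ∉ U := by simp [hU]
    rw [h2, Finset.card_insert_of_notMem h3] at h1
    have h4 : Fintype.card W = Fintype.card F3 ^ Module.finrank F3 W :=
      card_eq_pow_finrank
    rw [ZMod.card] at h4
    omega
  have hsplit : U = A ∪ A.image (fun u => (2:F3) • u) := by
    ext u
    simp only [hU, hA, Finset.mem_union, Finset.mem_filter, Finset.mem_univ, true_and,
      Finset.mem_image, mem_N]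
    constructor
    · rintro ⟨huW, hu0⟩
      rcases D1 u with h0 | hiff
      · exact absurd h0 hu0
      by_cases hp : Pfirst u
      · exact Or.inl ⟨⟨hu0, hp⟩, huW⟩
      · have h2 : Pfirst ((2:F3) • u) := by by_contra hq; exact hp (hiff.2 hq)
        have h2n : (2:F3) • u ≠ 0 := by
          intro he; apply hu0
          have := congrArg (fun w => (2:F3) • w) he
          simpa [two_smul_two_smul] using this
        refine Or.inr ⟨(2:F3) • u, ⟨⟨⟨h2n, h2⟩, W.smul_mem _ huW⟩, two_smul_two_smul u⟩⟩
    · rintro (⟨⟨hu0, _⟩, huW⟩ | ⟨v, ⟨⟨⟨hv0, _⟩, hvW⟩, rfl⟩⟩)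
      · exact ⟨huW, hu0⟩
      · refine ⟨W.smul_mem _ hvW, ?_⟩
        intro he; apply hv0
        have := congrArg (fun w => (2:F3) • w) he
        simpa [two_smul_two_smul] using this
  have hdisj : Disjoint A (A.image (fun u => (2:F3) • u)) := by
    rw [Finset.disjoint_left]
    rintro u huA huB
    simp only [hA, Finset.mem_image, Finset.mem_filter, mem_N] at huA huB
    obtain ⟨v, ⟨⟨⟨hv0, hvp⟩, _⟩, rfl⟩⟩ := huB
    rcases D1 v with h0 | hiff
    · exact hv0 h0
    · exact (hiff.1 hvp) huA.1.2
  have hinj : (A.image (fun u => (2:F3) • u)).card = A.card := by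
    apply Finset.card_image_of_injective
    intro x y hxy
    have := congrArg (fun w => (2:F3) • w) hxy
    simpa [two_smul_two_smul] using this
  have := Finset.card_union_of_disjoint hdisj
  rw [← hsplit, hinj] at this
  omega

/-- membership in the perp of a single vector -/
lemma mem_perp_singleton {u v : V3} : u ∈ B.orthogonal (span F3 {v}) ↔ B v u = 0 := by
  rw [LinearMap.BilinForm.mem_orthogonal_iff]
  constructor
  · intro h; exact h v (mem_span_singleton_self v)
  · intro h n hn
    rw [mem_span_singleton] at hn
    obtain ⟨c, rfl⟩ := hn
    show B (c • v) u = 0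
    rw [map_smul]
    simp [h]

lemma perp_sup (p q : Submodule F3 V3) :
    B.orthogonal (p ⊔ q) = B.orthogonal p ⊓ B.orthogonal q := by
  apply le_antisymm
  · exact le_inf (LinearMap.BilinForm.orthogonal_le le_sup_left)
      (LinearMap.BilinForm.orthogonal_le le_sup_right)
  · intro v hv
    rw [LinearMap.BilinForm.mem_orthogonal_iff]
    intro n hn
    rw [Submodule.mem_sup] at hn
    obtain ⟨x, hx, y, hy, rfl⟩ := hn
    show B (x + y) v = 0
    rw [map_add]
    have hx' := hv.1 x hx
    have hy' := hv.2 y hy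
    show B x v + B y v = 0
    rw [hx', hy', add_zero]

lemma finrank_V3 : Module.finrank F3 V3 = 5 := by
  simp [Module.finrank_pi]

lemma finrank_perp (W : Submodule F3 V3) :
    Module.finrank F3 (B.orthogonal W) = 5 - Module.finrank F3 W := by
  rw [LinearMap.BilinForm.finrank_orthogonal B_nondeg, finrank_V3]

lemma inf_span_bot {W : Submodule F3 V3} {u : V3} (hu : u ∉ W) :
    W ⊓ span F3 {u} = ⊥ := by
  rw [eq_bot_iff]
  intro x hx
  rw [Submodule.mem_inf] at hx
  obtain ⟨hxW, hxu⟩ := hx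
  rw [mem_span_singleton] at hxu
  obtain ⟨c, rfl⟩ := hxu
  rcases eq_or_ne c 0 with rfl | hc
  · simp
  · exfalso; apply hu
    have := W.smul_mem c⁻¹ hxW
    rwa [smul_smul, inv_mul_cancel₀ hc, one_smul] at this

lemma finrank_sup_span {W : Submodule F3 V3} {u : V3} (hu : u ∉ W) (hu0 : u ≠ 0) :
    Module.finrank F3 (W ⊔ span F3 {u} : Submodule F3 V3)
      = Module.finrank F3 W + 1 := by
  have := Submodule.finrank_sup_add_finrank_inf_eq W (span F3 {u})
  rw [inf_span_bot hu, finrank_bot, finrank_span_singleton hu0] at this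
  omega

open scoped Classical in
lemma fm_top (K : PGPt F3 5 → ℕ) : fm K ⊤ = ∑ u ∈ N, K (mkP u) := by
  classical
  rw [fm_eq]
  congr 1
  apply Finset.filter_true_of_mem
  intro u _
  exact Submodule.mem_top

open scoped Classical in
/-- every line is blocked -/
lemma line_blocked (K : PGPt F3 5 → ℕ) (hK : IsMinihyper K 70 22)
    (W2 : Submodule F3 V3) (h2 : Module.finrank F3 W2 = 2) : 1 ≤ fm K W2 := by
  set Wp := B.orthogonal W2 with hWpdef
  set Hab := N.filter (fun v => v ∈ Wp) with hHab
  have hWp : Module.finrank F3 Wp = 3 := by rw [hWpdef, finrank_perp, h2]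
  have hcard : Hab.card = 13 := by
    have := card2 Wp
    rw [hHab]
    rw [hWp] at this
    rw [show ((3:ℕ) ^ 3 = 27) from by norm_num] at this
    omega
  -- the per-u count
  have count_u : ∀ u ∈ N, (Hab.filter (fun v => u ∈ B.orthogonal (span F3 {v}))).card
      = if u ∈ W2 then 13 else 4 := by
    intro u hu
    have hu0 : u ≠ 0 := (mem_N.1 hu).1
    have hfe : Hab.filter (fun v => u ∈ B.orthogonal (span F3 {v}))
        = N.filter (fun v => v ∈ B.orthogonal (W2 ⊔ span F3 {u})) := by
      rw [hHab, Finset.filter_filter]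
      apply Finset.filter_congr
      intro v _
      rw [perp_sup, Submodule.mem_inf]
      constructor
      · rintro ⟨hvWp, hvorth⟩
        refine ⟨hvWp, ?_⟩
        rw [mem_perp_singleton] at hvorth ⊢
        rwa [B_comm]
      · rintro ⟨hvWp, hvorth⟩
        refine ⟨hvWp, ?_⟩
        rw [mem_perp_singleton] at hvorth ⊢
        rwa [B_comm]
    rw [hfe]
    by_cases huW : u ∈ W2
    · have hsup : W2 ⊔ span F3 {u} = W2 := by
        rw [sup_eq_left, span_le]
        simpa using huW
      have := card2 (B.orthogonal (W2 ⊔ span F3 {u}))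
      rw [finrank_perp, hsup, h2] at this
      rw [show ((3:ℕ) ^ (5 - 2) = 27) from by norm_num] at this
      rw [if_pos huW, hsup]
      omega
    · have hsup : Module.finrank F3 (W2 ⊔ span F3 {u} : Submodule F3 V3) = 3 := by
        rw [finrank_sup_span huW hu0, h2]
      have := card2 (B.orthogonal (W2 ⊔ span F3 {u}))
      rw [finrank_perp, hsup] at this
      rw [show ((3:ℕ) ^ (5 - 3) = 9) from by norm_num] at this
      rw [if_neg huW]
      omega
  -- S1 lower bound
  have hlow : 286 ≤ ∑ v ∈ Hab, fm K (B.orthogonal (span F3 {v})) := by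
    calc (286:ℕ) = 13 * 22 := by norm_num
    _ = ∑ _v ∈ Hab, 22 := by rw [Finset.sum_const, hcard, smul_eq_mul]
    _ ≤ _ := by
      apply Finset.sum_le_sum
      intro v hv
      have hv0 : v ≠ 0 := (mem_N.1 (Finset.mem_filter.1 hv).1).1
      apply hK.2.1
      rw [finrank_perp, finrank_span_singleton hv0]
  -- S1 computation
  have hswap : ∑ v ∈ Hab, fm K (B.orthogonal (span F3 {v}))
      = ∑ u ∈ N, (if u ∈ W2 then 13 else 4) * K (mkP u) := by
    calc ∑ v ∈ Hab, fm K (B.orthogonal (span F3 {v}))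
        = ∑ v ∈ Hab, ∑ u ∈ N, if u ∈ B.orthogonal (span F3 {v}) then K (mkP u) else 0 := by
          apply Finset.sum_congr rfl
          intro v _
          rw [fm_eq, Finset.sum_filter]
    _ = ∑ u ∈ N, ∑ v ∈ Hab, if u ∈ B.orthogonal (span F3 {v}) then K (mkP u) else 0 :=
          Finset.sum_comm
    _ = ∑ u ∈ N, (if u ∈ W2 then 13 else 4) * K (mkP u) := by
          apply Finset.sum_congr rfl
          intro u hu
          rw [← Finset.sum_filter, Finset.sum_const, ← count_u u hu, smul_eq_mul]
  -- split the sum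
  set T := ∑ u ∈ N.filter (fun u => u ∈ W2), K (mkP u) with hT
  have hTfm : fm K W2 = T := fm_eq K W2
  have htot : ∑ u ∈ N, K (mkP u) = 70 := by rw [← fm_top]; exact hK.1
  have e1 : ∑ u ∈ N.filter (fun u => u ∈ W2), (if u ∈ W2 then 13 else 4) * K (mkP u)
      = 13 * T := by
    rw [hT, Finset.mul_sum]
    apply Finset.sum_congr rfl
    intro u hu
    rw [if_pos (Finset.mem_filter.1 hu).2]
  have e2 : ∑ u ∈ N.filter (fun u => ¬ u ∈ W2), (if u ∈ W2 then 13 else 4) * K (mkP u)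
      = 4 * (∑ u ∈ N.filter (fun u => ¬ u ∈ W2), K (mkP u)) := by
    rw [Finset.mul_sum]
    apply Finset.sum_congr rfl
    intro u hu
    rw [if_neg (Finset.mem_filter.1 hu).2]
  have hsplit : ∑ u ∈ N, (if u ∈ W2 then 13 else 4) * K (mkP u)
      = 13 * T + 4 * (∑ u ∈ N.filter (fun u => ¬ u ∈ W2), K (mkP u)) := by
    rw [← Finset.sum_filter_add_sum_filter_not N (fun u => u ∈ W2), e1, e2]
  have hsum2 : T + (∑ u ∈ N.filter (fun u => ¬ u ∈ W2), K (mkP u)) = 70 := by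
    rw [hT, Finset.sum_filter_add_sum_filter_not N (fun u => u ∈ W2)]
    exact htot
  rw [hswap, hsplit] at hlow
  omega

lemma span_point_eq {w x : V3} (hw : w ∈ N) (hx : x ∈ N) (hws : w ∈ span F3 {x}) :
    w = x := by
  have hw0 : w ≠ 0 := (mem_N.1 hw).1
  rw [mem_span_singleton] at hws
  obtain ⟨c, rfl⟩ := hws
  have hc : c ≠ 0 := by rintro rfl; simp at hw0
  apply norm_unique hw hx
  have hx0 : x ≠ 0 := (mem_N.1 hx).1
  rw [mkP_eq hw0, mkP_eq hx0, Projectivization.mk_eq_mk_iff]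
  exact ⟨Units.mk0 c hc, rfl⟩

open scoped Classical in
theorem stmt7_aux (K : PGPt F3 5 → ℕ) (hK : IsMinihyper K 70 22)
    (S : Submodule F3 V3) (hS : Module.finrank F3 S = 4)
    (hS49 : 49 ≤ fm K S) :
    ∀ P : PGPt F3 5, P.submodule ≤ S → 1 ≤ K P := by
  intro P hPS
  by_contra hKP
  have hKP0 : K P = 0 := by omega
  obtain ⟨a, haN, hamk, hasp⟩ := norm_exists P.rep_nonzero
  have ha0 : a ≠ 0 := (mem_N.1 haN).1
  have hPmk : mkP a = P := by
    rw [hamk, mkP_eq P.rep_nonzero, Projectivization.mk_rep]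
  have haS : a ∈ S := by
    apply hPS
    rw [Projectivization.submodule_eq]
    exact hasp
  have hKa : K (mkP a) = 0 := by rw [hPmk]; exact hKP0
  have hspanaS : span F3 {a} ≤ S := by rwa [span_singleton_le_iff_mem]
  -- the outside points
  set O := N.filter (fun u => ¬ u ∈ S) with hO
  have htot : ∑ u ∈ N, K (mkP u) = 70 := by rw [← fm_top]; exact hK.1
  have hfS : fm K S = ∑ u ∈ N.filter (fun u => u ∈ S), K (mkP u) := fm_eq K S
  have hOsum : ∑ u ∈ O, K (mkP u) ≤ 21 := by
    have hsp := Finset.sum_filter_add_sum_filter_not N (fun u => u ∈ S)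
      (fun u => K (mkP u))
    rw [hO]
    omega
  -- cardinalities
  have hcardS : (N.filter (fun u => u ∈ S)).card = 40 := by
    have := card2 S
    rw [hS] at this
    rw [show ((3:ℕ) ^ 4 = 81) from by norm_num] at this
    omega
  have hcardN : N.card = 121 := by
    have := card2 ⊤
    rw [finrank_top, finrank_V3] at this
    rw [show ((3:ℕ) ^ 5 = 243) from by norm_num] at this
    rw [Finset.filter_true_of_mem (fun u _ => Submodule.mem_top)] at this
    omega
  have hcardO : O.card = 81 := by
    have := Finset.card_filter_add_card_filter_not (s := N)
      (p := fun u => u ∈ S)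
    rw [hO]
    omega
  -- the lines through a
  set g : V3 → Submodule F3 V3 := fun u => span F3 {a} ⊔ span F3 {u} with hg
  have hrank : ∀ u ∈ O, Module.finrank F3 (g u) = 2 := by
    intro u hu
    have huS : ¬ u ∈ S := (Finset.mem_filter.1 hu).2
    have husp : u ∉ span F3 {a} := fun h => huS (hspanaS h)
    have hu0 : u ≠ 0 := (mem_N.1 (Finset.mem_filter.1 hu).1).1
    rw [hg, finrank_sup_span husp hu0, finrank_span_singleton ha0]
  -- fibers
  have hfiber : ∀ u ∈ O, O.filter (fun u' => g u' = g u)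
      = (N.filter (fun w => w ∈ g u)).erase a := by
    intro u hu
    have huS : ¬ u ∈ S := (Finset.mem_filter.1 hu).2
    have hu2 : Module.finrank F3 (g u) = 2 := hrank u hu
    have hugu : u ∈ g u := Submodule.mem_sup_right (mem_span_singleton_self u)
    have hinfS : g u ⊓ S = span F3 {a} := by
      have hle : span F3 {a} ≤ g u ⊓ S := le_inf le_sup_left hspanaS
      have hlt : g u ⊓ S < g u := by
        rw [lt_iff_le_and_ne]
        refine ⟨inf_le_left, ?_⟩
        intro he
        apply huS
        have : g u ≤ S := by rw [← he]; exact inf_le_right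
        exact this hugu
      have hfr : Module.finrank F3 (g u ⊓ S : Submodule F3 V3) < 2 := by
        rw [← hu2]
        exact Submodule.finrank_lt_finrank_of_lt hlt
      symm
      apply Submodule.eq_of_le_of_finrank_le hle
      rw [finrank_span_singleton ha0]
      omega
    ext w
    simp only [Finset.mem_filter, Finset.mem_erase, hO]
    constructor
    · rintro ⟨⟨hwN, hwS⟩, hgw⟩
      refine ⟨?_, hwN, ?_⟩
      · rintro rfl; exact hwS haS
      · rw [← hgw]; exact Submodule.mem_sup_right (mem_span_singleton_self w)
    · rintro ⟨hwa, hwN, hwgu⟩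
      have hwS : ¬ w ∈ S := by
        intro hwS
        apply hwa
        apply span_point_eq hwN haN
        rw [← hinfS]
        exact ⟨hwgu, hwS⟩
      refine ⟨⟨hwN, hwS⟩, ?_⟩
      have hwsp : w ∉ span F3 {a} := by
        intro h
        exact hwa (span_point_eq hwN haN h)
      have hw0 : w ≠ 0 := (mem_N.1 hwN).1
      apply Submodule.eq_of_le_of_finrank_le
      · rw [hg]
        apply sup_le le_sup_left
        rw [span_singleton_le_iff_mem]
        exact hwgu
      · rw [hu2, hg, finrank_sup_span hwsp hw0, finrank_span_singleton ha0]
  -- fiber cards and sums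
  have hfcard : ∀ u ∈ O, (O.filter (fun u' => g u' = g u)).card = 3 := by
    intro u hu
    rw [hfiber u hu]
    have h4 : (N.filter (fun w => w ∈ g u)).card = 4 := by
      have := card2 (g u)
      rw [hrank u hu] at this
      rw [show ((3:ℕ) ^ 2 = 9) from by norm_num] at this
      omega
    rw [Finset.card_erase_of_mem, h4]
    rw [Finset.mem_filter]
    exact ⟨haN, Submodule.mem_sup_left (mem_span_singleton_self a)⟩
  have hfsum : ∀ u ∈ O, 1 ≤ ∑ u' ∈ O.filter (fun u' => g u' = g u), K (mkP u') := by
    intro u hu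
    rw [hfiber u hu, Finset.sum_erase (f := fun u' => K (mkP u')) _ hKa, ← fm_eq]
    exact line_blocked K hK (g u) (hrank u hu)
  -- assemble: number of fibers
  have hmaps : ∀ u ∈ O, g u ∈ O.image g := fun u hu => Finset.mem_image_of_mem g hu
  have hcardim : O.card = ∑ t ∈ O.image g, (O.filter (fun u => g u = t)).card :=
    Finset.card_eq_sum_card_fiberwise hmaps
  have himfib : ∀ t ∈ O.image g, (O.filter (fun u => g u = t)).card = 3 := by
    intro t ht
    obtain ⟨u, hu, rfl⟩ := Finset.mem_image.1 ht
    exact hfcard u hu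
  have him : (O.image g).card = 27 := by
    rw [Finset.sum_congr rfl himfib, Finset.sum_const, smul_eq_mul] at hcardim
    omega
  have hsum27 : 27 ≤ ∑ u ∈ O, K (mkP u) := by
    rw [← Finset.sum_fiberwise_of_maps_to hmaps (fun u => K (mkP u))]
    calc (27:ℕ) = ∑ _t ∈ O.image g, 1 := by rw [Finset.sum_const, him, smul_eq_mul]
    _ ≤ _ := by
      apply Finset.sum_le_sum
      intro t ht
      obtain ⟨u, hu, rfl⟩ := Finset.mem_image.1 ht
      exact hfsum u hu
  omega

end Stmt7Aux

/-- in a `(70,22)`-minihyper in `PG(4,3)`, every point of a solid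
of multiplicity at least 49 has multiplicity at least 1. -/
theorem stmt7 (K : PGPt (ZMod 3) 5 → ℕ) (hK : IsMinihyper K 70 22)
    (S : Submodule (ZMod 3) (Fin 5 → ZMod 3)) (hS : Module.finrank (ZMod 3) S = 4)
    (hS49 : 49 ≤ fm K S) :
    ∀ P : PGPt (ZMod 3) 5, P.submodule ≤ S → 1 ≤ K P := by
  exact Stmt7Aux.stmt7_aux K hK S hS hS49
end
end

section
/- Let F be a (70,22)-minihyper in PG(4,3) and let S be a solid with F(S) ≥ 49 such that every point of S has positive multiplicity. Then F − χ_S is a (30,9)-minihyper in PG(4,3), i.e., F is the sum of the characteristic function of a solid and a (30,9)-minihyper. -/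
open scoped BigOperators

noncomputable section

instance : Finite (PGPt (ZMod 3) 5) :=
  Finite.of_surjective (fun v : {v : Fin 5 → ZMod 3 // v ≠ 0} => Projectivization.mk (ZMod 3) (v : Fin 5 → ZMod 3) v.2)
    (fun P => ⟨⟨P.rep, P.rep_nonzero⟩, P.mk_rep⟩)
noncomputable instance : Fintype (PGPt (ZMod 3) 5) := Fintype.ofFinite _

open Classical Finset in
lemma aux_two_mul_card (W : Submodule (ZMod 3) (Fin 5 → ZMod 3)) :
    2 * (univ.filter (fun P : PGPt (ZMod 3) 5 => P.submodule ≤ W)).card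
      = 3 ^ (Module.finrank (ZMod 3) W) - 1 := by
  classical
  set V := Fin 5 → ZMod 3
  set s : Finset {v : V // v ≠ 0} := univ.filter (fun v => (v : V) ∈ W) with hs
  set t : Finset (PGPt (ZMod 3) 5) := univ.filter (fun P => P.submodule ≤ W) with ht
  have hmap : ∀ v ∈ s, Projectivization.mk (ZMod 3) (v : V) v.2 ∈ t := by
    intro v hv
    simp only [hs, ht, mem_filter, mem_univ, true_and] at hv ⊢
    rw [Projectivization.submodule_mk, Submodule.span_singleton_le_iff_mem]
    exact hv
  have hcard := Finset.card_eq_sum_card_fiberwise hmap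
  have hfib : ∀ P ∈ t, (s.filter (fun v : {v : V // v ≠ 0} => Projectivization.mk (ZMod 3) (v : V) v.2 = P)).card = 2 := by
    intro P hP
    simp only [ht, mem_filter, mem_univ, true_and] at hP
    have hrepW : P.rep ∈ W := by
      have := P.submodule_eq ▸ hP
      exact this (Submodule.mem_span_singleton_self _)
    have hne : (⟨P.rep, P.rep_nonzero⟩ : {v : V // v ≠ 0}) ≠ ⟨-P.rep, neg_ne_zero.2 P.rep_nonzero⟩ := by
      intro h
      have h2 : P.rep = -P.rep := congrArg Subtype.val h
      have h4 : P.rep + P.rep = 0 := eq_neg_iff_add_eq_zero.mp h2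
      have h3 : (2 : ZMod 3) • P.rep = 0 := by rw [two_smul]; exact h4
      rcases smul_eq_zero.1 h3 with h | h
      · exact absurd h (by decide)
      · exact P.rep_nonzero h
    have hset : s.filter (fun v : {v : V // v ≠ 0} => Projectivization.mk (ZMod 3) (v : V) v.2 = P)
        = ({⟨P.rep, P.rep_nonzero⟩, ⟨-P.rep, neg_ne_zero.2 P.rep_nonzero⟩} : Finset {v : V // v ≠ 0}) := by
      ext v
      simp only [hs, mem_filter, mem_univ, true_and, mem_insert, mem_singleton]
      constructor
      · rintro ⟨hvW, hvP⟩
        rw [← P.mk_rep, Projectivization.mk_eq_mk_iff] at hvP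
        obtain ⟨a, ha⟩ := hvP
        have ha2' : ∀ b : (ZMod 3)ˣ, (b : ZMod 3) = 1 ∨ (b : ZMod 3) = 2 := by decide
        have ha2 := ha2' a
        rw [Units.smul_def] at ha
        rcases ha2 with h | h
        · left; apply Subtype.ext; rw [← ha, h, one_smul]
        · right; apply Subtype.ext
          rw [← ha, h]
          show (2 : ZMod 3) • P.rep = -P.rep
          have h21 : (2 : ZMod 3) = -1 := by decide
          rw [h21, neg_smul, one_smul]
      · rintro (rfl | rfl)
        · exact ⟨hrepW, P.mk_rep⟩
        · refine ⟨neg_mem hrepW, ?_⟩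
          rw [← P.mk_rep, Projectivization.mk_eq_mk_iff]
          exact ⟨-1, by simp⟩
    rw [hset, Finset.card_insert_of_notMem (by simpa using hne), Finset.card_singleton]
  have hsum : s.card = 2 * t.card := by
    rw [hcard, Finset.sum_congr rfl hfib, Finset.sum_const, smul_eq_mul, mul_comm]
  have hcards : s.card = 3 ^ (Module.finrank (ZMod 3) W) - 1 := by
    have hW : Fintype.card W = 3 ^ Module.finrank (ZMod 3) W := by
      rw [Module.card_eq_pow_finrank (K := ZMod 3)]; norm_num
    have hbij : s.card = ((univ : Finset V).filter (fun v => v ∈ W ∧ v ≠ 0)).card := by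
      refine Finset.card_nbij (i := fun v => (v : V)) ?_ ?_ ?_
      · intro v hv
        simp only [Finset.mem_coe, hs, mem_filter, mem_univ, true_and] at hv
        exact Finset.mem_filter.2 ⟨mem_univ _, hv, v.2⟩
      · intro a _ b _ hab; exact Subtype.ext hab
      · intro b hb
        rw [Finset.mem_coe, Finset.mem_filter] at hb
        refine ⟨⟨b, hb.2.2⟩, ?_, rfl⟩
        rw [Finset.mem_coe, hs, Finset.mem_filter]
        exact ⟨mem_univ _, hb.2.1⟩
    have herase : (univ : Finset V).filter (fun v => v ∈ W ∧ v ≠ 0)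
        = ((univ : Finset V).filter (fun v => v ∈ W)).erase 0 := by
      ext v; simp [and_comm]
    have hW2 : ((univ : Finset V).filter (fun v => v ∈ W)).card = Fintype.card W := by
      have h5 := Fintype.card_subtype (fun v : V => v ∈ W)
      exact h5.symm
    rw [hbij, herase, Finset.card_erase_of_mem (by simp [W.zero_mem]), hW2, hW]
  rw [← hsum, hcards]

open Classical Finset in
lemma fm_eq (K : PGPt (ZMod 3) 5 → ℕ) (W : Submodule (ZMod 3) (Fin 5 → ZMod 3)) :
    fm K W = ∑ P ∈ univ.filter (fun P : PGPt (ZMod 3) 5 => P.submodule ≤ W), K P := by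
  rw [fm, show {P : PGPt (ZMod 3) 5 | P.submodule ≤ W}
      = ↑(univ.filter (fun P : PGPt (ZMod 3) 5 => P.submodule ≤ W)) by ext P; simp]
  exact finsum_mem_coe_finset _ _

open Classical Finset in
lemma fm_chi (S W : Submodule (ZMod 3) (Fin 5 → ZMod 3)) :
    fm (fun P : PGPt (ZMod 3) 5 => if P.submodule ≤ S then 1 else 0) W
      = (univ.filter (fun P : PGPt (ZMod 3) 5 => P.submodule ≤ W ⊓ S)).card := by
  rw [fm_eq, ← Finset.sum_filter, Finset.filter_filter, Finset.sum_const, smul_eq_mul, mul_one]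
  congr 1
  ext P
  simp [le_inf_iff]

lemma inf_dim (H S : Submodule (ZMod 3) (Fin 5 → ZMod 3))
    (hH : Module.finrank (ZMod 3) H = 4) (hS : Module.finrank (ZMod 3) S = 4)
    (hne : H ≠ S) : Module.finrank (ZMod 3) ↥(H ⊓ S) = 3 := by
  have hV : Module.finrank (ZMod 3) (Fin 5 → ZMod 3) = 5 := Module.finrank_fin_fun _
  have hsum := Submodule.finrank_sup_add_finrank_inf_eq H S
  have hle : Module.finrank (ZMod 3) ↥(H ⊔ S) ≤ 5 := by
    have h := Submodule.finrank_le (H ⊔ S)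
    rwa [hV] at h
  have hlt : H < H ⊔ S := by
    refine lt_of_le_of_ne le_sup_left fun h => hne ?_
    have hSH : S ≤ H := h ▸ le_sup_right
    exact (Submodule.eq_of_le_of_finrank_le hSH (by rw [hH, hS])).symm
  have := Submodule.finrank_lt_finrank_of_lt hlt
  omega

open Classical Finset in
lemma fm_sub (K : PGPt (ZMod 3) 5 → ℕ) (S : Submodule (ZMod 3) (Fin 5 → ZMod 3))
    (hpos : ∀ P : PGPt (ZMod 3) 5, P.submodule ≤ S → 1 ≤ K P)
    (W : Submodule (ZMod 3) (Fin 5 → ZMod 3)) :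
    fm (fun P => K P - (if P.submodule ≤ S then 1 else 0)) W
      + fm (fun P : PGPt (ZMod 3) 5 => if P.submodule ≤ S then 1 else 0) W = fm K W := by
  rw [fm_eq, fm_eq, fm_eq, ← Finset.sum_add_distrib]
  refine Finset.sum_congr rfl fun P _ => ?_
  by_cases h : P.submodule ≤ S
  · simp [h, Nat.sub_add_cancel (hpos P h)]
  · simp [h]

open Classical in
/-- subtracting the characteristic function of a solid of
multiplicity ≥ 49 all of whose points are positive yields a `(30,9)`-minihyper. -/
theorem stmt8 (K : PGPt (ZMod 3) 5 → ℕ) (hK : IsMinihyper K 70 22)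
    (S : Submodule (ZMod 3) (Fin 5 → ZMod 3)) (hS : Module.finrank (ZMod 3) S = 4)
    (hS49 : 49 ≤ fm K S)
    (hpos : ∀ P : PGPt (ZMod 3) 5, P.submodule ≤ S → 1 ≤ K P) :
    IsMinihyper (fun P => K P - (if P.submodule ≤ S then 1 else 0)) 30 9 := by
  classical
  obtain ⟨h70, hge, H0, hH0rank, hH022⟩ := hK
  have h40 : ∀ W : Submodule (ZMod 3) (Fin 5 → ZMod 3), Module.finrank (ZMod 3) W = 4 →
      (Finset.univ.filter (fun P : PGPt (ZMod 3) 5 => P.submodule ≤ W)).card = 40 := by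
    intro W hW
    have := aux_two_mul_card W
    rw [hW] at this
    omega
  have h13 : ∀ W : Submodule (ZMod 3) (Fin 5 → ZMod 3), Module.finrank (ZMod 3) W = 3 →
      (Finset.univ.filter (fun P : PGPt (ZMod 3) 5 => P.submodule ≤ W)).card = 13 := by
    intro W hW
    have := aux_two_mul_card W
    rw [hW] at this
    omega
  have hchiS : fm (fun P : PGPt (ZMod 3) 5 => if P.submodule ≤ S then 1 else 0) S = 40 := by
    rw [fm_chi, inf_idem]
    exact h40 S hS
  refine ⟨?_, ?_, ?_⟩
  · have hsub := fm_sub K S hpos ⊤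
    have hchi : fm (fun P : PGPt (ZMod 3) 5 => if P.submodule ≤ S then 1 else 0) ⊤ = 40 := by
      rw [fm_chi, top_inf_eq]
      exact h40 S hS
    omega
  · intro H hH
    have hH4 : Module.finrank (ZMod 3) H = 4 := by omega
    have hsub := fm_sub K S hpos H
    by_cases hHS : H = S
    · subst hHS
      omega
    · have hchi : fm (fun P : PGPt (ZMod 3) 5 => if P.submodule ≤ S then 1 else 0) H = 13 := by
        rw [fm_chi]
        exact h13 _ (inf_dim H S hH4 hS hHS)
      have := hge H hH
      omega
  · refine ⟨H0, hH0rank, ?_⟩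
    have hH04 : Module.finrank (ZMod 3) H0 = 4 := by omega
    have hne : H0 ≠ S := by
      intro h
      rw [h] at hH022
      omega
    have hsub := fm_sub K S hpos H0
    have hchi : fm (fun P : PGPt (ZMod 3) 5 => if P.submodule ≤ S then 1 else 0) H0 = 13 := by
      rw [fm_chi]
      exact h13 _ (inf_dim H0 S hH04 hS hne)
    omega
end
end

section
/- There is no (11,3)-minihyper in PG(2,3); equivalently, there is no multiset of points in the projective plane of order 3 of total multiplicity 11 in which every line has multiplicity at least 3 and some line has multiplicity exactly 3. -/
open scoped BigOperators

noncomputable section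

-- ===== auxiliary development =====
section Aux

abbrev V3 := Fin 3 → ZMod 3

instance decRelPG : DecidableRel (projectivizationSetoid (ZMod 3) V3).r :=
  fun x y => decidable_of_iff (∃ a : (ZMod 3)ˣ, a • (y : V3) = (x : V3)) (by
    show _ ↔ (MulAction.orbitRel (ZMod 3)ˣ V3).r x.1 y.1
    rw [MulAction.orbitRel_apply, MulAction.mem_orbit_iff])

instance : DecidableEq (Projectivization (ZMod 3) V3) :=
  @Quotient.decidableEq _ (projectivizationSetoid (ZMod 3) V3) decRelPG

instance : Fintype (Projectivization (ZMod 3) V3) :=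
  @Quotient.fintype _ _ (projectivizationSetoid (ZMod 3) V3) decRelPG

def dot3 (c v : V3) : ZMod 3 := c 0 * v 0 + c 1 * v 1 + c 2 * v 2

def pts : Fin 13 → V3 :=
  ![![1,0,0], ![1,1,0], ![1,2,0], ![1,0,1], ![1,1,1], ![1,2,1],
    ![1,0,2], ![1,1,2], ![1,2,2], ![0,1,0], ![0,1,1], ![0,1,2], ![0,0,1]]

lemma pts_ne_zero : ∀ i, pts i ≠ 0 := by decide

lemma pts_complete : ∀ v : V3, v ≠ 0 → ∃ i, ∃ a : ZMod 3, a • pts i = v := by decide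

lemma pts_inj : ∀ i j : Fin 13, (∃ a : ZMod 3, a • pts j = pts i) → i = j := by decide

lemma card_lines : ∀ i₀ : Fin 13,
    (Finset.univ.filter fun j => dot3 (pts j) (pts i₀) = 0).card = 4 := by decide

lemma count_lemma : ∀ i₀ i : Fin 13,
    (Finset.univ.filter fun j =>
      dot3 (pts j) (pts i₀) = 0 ∧ dot3 (pts j) (pts i) = 0).card
      = if i = i₀ then 4 else 1 := by decide

lemma dot3_surj : ∀ j : Fin 13, ∃ v : V3, dot3 (pts j) v = 1 := by decide

def lfun (c : V3) : V3 →ₗ[ZMod 3] ZMod 3 where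
  toFun v := dot3 c v
  map_add' x y := by simp [dot3]; ring
  map_smul' a x := by simp [dot3]; ring

@[simp] lemma lfun_apply (c v : V3) : lfun c v = dot3 c v := rfl

def mkpt (i : Fin 13) : Projectivization (ZMod 3) V3 :=
  Projectivization.mk _ (pts i) (pts_ne_zero i)

lemma mkpt_bij : Function.Bijective mkpt := by
  constructor
  · intro i j h
    exact pts_inj i j ((Projectivization.mk_eq_mk_iff' _ _ _ _ _).1 h)
  · intro P
    induction P with
    | h v hv =>
      obtain ⟨i, a, ha⟩ := pts_complete v hv
      exact ⟨i, ((Projectivization.mk_eq_mk_iff' _ _ _ _ _).2 ⟨a, ha⟩).symm⟩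

lemma submodule_le_ker_iff (c v : V3) (hv : v ≠ 0) :
    (Projectivization.mk (ZMod 3) v hv).submodule ≤ LinearMap.ker (lfun c) ↔ dot3 c v = 0 := by
  rw [Projectivization.submodule_mk, Submodule.span_singleton_le_iff_mem, LinearMap.mem_ker,
    lfun_apply]

lemma finrank_ker (j : Fin 13) :
    Module.finrank (ZMod 3) (LinearMap.ker (lfun (pts j))) = 2 := by
  have hsurj : Function.Surjective (lfun (pts j)) := by
    obtain ⟨v, hv⟩ := dot3_surj j
    intro y
    exact ⟨y • v, by simp [hv]⟩
  have h := LinearMap.finrank_range_add_finrank_ker (lfun (pts j))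
  rw [LinearMap.range_eq_top.2 hsurj] at h
  simp only [finrank_top, Module.finrank_fin_fun, Module.finrank_self] at h
  omega

open Classical in
lemma fm_eq_s9 (K : PGPt (ZMod 3) 3 → ℕ) (W : Submodule (ZMod 3) V3) :
    fm K W = ∑ i : Fin 13, if (mkpt i).submodule ≤ W then K (mkpt i) else 0 := by
  have hset : {P : PGPt (ZMod 3) 3 | P.submodule ≤ W}
      = ↑(Finset.univ.filter fun P : PGPt (ZMod 3) 3 => P.submodule ≤ W) := by
    ext P; simp
  rw [fm, hset, finsum_mem_coe_finset, Finset.sum_filter]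
  exact (Fintype.sum_bijective mkpt mkpt_bij _ _ (fun i => rfl)).symm

lemma fm_top' (K : PGPt (ZMod 3) 3 → ℕ) : fm K ⊤ = ∑ i : Fin 13, K (mkpt i) := by
  rw [fm_eq_s9]; simp

open Classical in
lemma fm_line (K : PGPt (ZMod 3) 3 → ℕ) (c : V3) :
    fm K (LinearMap.ker (lfun c))
      = ∑ i : Fin 13, if dot3 c (pts i) = 0 then K (mkpt i) else 0 := by
  rw [fm_eq_s9]
  exact Finset.sum_congr rfl fun i _ =>
    if_congr (submodule_le_ker_iff c (pts i) (pts_ne_zero i)) rfl rfl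

end Aux

/-- there is no `(11,3)`-minihyper in `PG(2,3)`. -/
theorem stmt9 : ¬ ∃ K : PGPt (ZMod 3) 3 → ℕ, IsMinihyper K 11 3 := by
  rintro ⟨K, htop, hge, -⟩
  have htot : ∑ i : Fin 13, K (mkpt i) = 11 := by rw [← fm_top' K]; exact htop
  have hline : ∀ j : Fin 13,
      3 ≤ ∑ i : Fin 13, if dot3 (pts j) (pts i) = 0 then K (mkpt i) else 0 := by
    intro j
    rw [← fm_line]
    exact hge _ (by rw [finrank_ker])
  have hpos : ∀ i₀ : Fin 13, 1 ≤ K (mkpt i₀) := by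
    intro i₀
    by_contra h
    have hK0 : K (mkpt i₀) = 0 := by omega
    set S := Finset.univ.filter fun j => dot3 (pts j) (pts i₀) = 0 with hS
    have h1 : 12 ≤ ∑ j ∈ S, ∑ i : Fin 13,
        if dot3 (pts j) (pts i) = 0 then K (mkpt i) else 0 := by
      calc (12 : ℕ) = S.card * 3 := by rw [hS, card_lines i₀]
      _ = ∑ _j ∈ S, 3 := by rw [Finset.sum_const, smul_eq_mul, mul_comm]
      _ ≤ _ := Finset.sum_le_sum fun j _ => hline j
    have h2 : ∑ j ∈ S, (∑ i : Fin 13,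
        if dot3 (pts j) (pts i) = 0 then K (mkpt i) else 0)
        = ∑ i : Fin 13, (if i = i₀ then 4 else 1) * K (mkpt i) := by
      rw [Finset.sum_comm]
      refine Finset.sum_congr rfl fun i _ => ?_
      rw [← Finset.sum_filter, Finset.sum_const, smul_eq_mul, hS, Finset.filter_filter,
        count_lemma i₀ i]
    rw [h2] at h1
    have h3 : ∑ i : Fin 13, (if i = i₀ then 4 else 1) * K (mkpt i)
        = (∑ i : Fin 13, K (mkpt i)) + 3 * K (mkpt i₀) := by
      have step : ∀ i : Fin 13, (if i = i₀ then 4 else 1) * K (mkpt i)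
          = K (mkpt i) + (if i = i₀ then 3 * K (mkpt i₀) else 0) := by
        intro i
        by_cases hii : i = i₀ <;> simp [hii]
        ring
      rw [Finset.sum_congr rfl fun i _ => step i, Finset.sum_add_distrib,
        Finset.sum_ite_eq' Finset.univ i₀]
      simp
    rw [h3, htot, hK0] at h1
    omega
  have h13 : (13 : ℕ) ≤ ∑ i : Fin 13, K (mkpt i) :=
    calc (13 : ℕ) = ∑ _i : Fin 13, 1 := by simp
    _ ≤ _ := Finset.sum_le_sum fun i _ => hpos i
  omega
end
end
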